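/- arXiv:1912.08128 — 9 statements merged into one kernel-verified Lean document; each statement's English description precedes it below -/
import Mathlib

section
/- Let Q = ax²+bxy+cy² be a primitive binary quadratic form over O_F with a > 0 at the fixed embedding and negative discriminant d_Q. Then the O_F-module O_F·(a·ω_Q) + O_F equals O_K if and only if d_Q = ε²·d_K for some unit ε ∈ O_F^× with ε > 0. -/
/-!
Put `θ = a ω`, a root of the monic polynomial `X² + b X + a c` lying in the upper half-plane, like
`ω_K`, a root of `X² + b_K X + c_K`. Since `1, ω_K` is an `O_F`-basis of `O_K` and `ω_K ∉ F`,
`1, θ` is another such basis exactly when `θ = ε ω_K + m` with `ε ∈ O_F^×`, `m ∈ O_F`; comparing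
imaginary parts forces `ε > 0`. Writing `δ = 2θ + b`, `δ_K = 2ω_K + b_K` for the square roots of
the discriminants, `θ = ε ω_K + m` gives `δ = ε δ_K + w` with `w ∈ O_F`, and squaring shows that
`w = 0`, i.e. `d_Q = ε² d_K`. Conversely `d_Q = ε² d_K` gives `δ = ± ε δ_K`, the sign is `+`
because both lie in the upper half-plane, and `(ε b_K - b) / 2` is integral over `O_F`, hence lies
in `O_F`, so that `θ = ε ω_K + (ε b_K - b) / 2`.
-/

open NumberField Complex

noncomputable section

def iota (F K : Type) [Field F] [Field K] [NumberField F] [Algebra F K]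
    (u : 𝓞 F) : K := algebraMap F K (u : F)

def IsFormRoot (F K : Type) [Field F] [Field K] [NumberField F] [Algebra F K]
    (σ : K →+* ℂ) (a b c : 𝓞 F) (ω : K) : Prop :=
  iota F K a * ω ^ 2 + iota F K b * ω + iota F K c = 0 ∧ 0 < (σ ω).im

open Polynomial in
theorem two_dvd_of_sq_add_two_mul_eq {R : Type*} [CommRing R] [IsDomain R] [IsIntegrallyClosed R]
    {t b c : R} (h : t ^ 2 + 2 * b * t = 4 * c) : 2 ∣ t := by
  rcases eq_or_ne (2 : R) 0 with h2 | h2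
  · have ht : t ^ 2 = 0 := by linear_combination h - (b * t - 2 * c) * h2
    simp [pow_eq_zero_iff two_ne_zero |>.mp ht]
  have h2L : (2 : FractionRing R) ≠ 0 := by
    simpa only [map_ofNat, map_zero] using (IsFractionRing.injective R (FractionRing R)).ne h2
  have hx : IsIntegral R (algebraMap R (FractionRing R) t / 2) := by
    refine ⟨X ^ 2 + (C b * X + C (-c)), monic_X_pow_add (degree_linear_le.trans_lt (by norm_num)),
      ?_⟩
    have hL := congrArg (algebraMap R (FractionRing R)) h
    simp only [map_add, map_mul, map_pow, map_ofNat] at hL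
    simp only [eval₂_add, eval₂_mul, eval₂_pow, eval₂_X, eval₂_C, eval₂_neg, map_neg]
    field_simp
    linear_combination hL
  obtain ⟨μ, hμ⟩ := IsIntegrallyClosed.isIntegral_iff.mp hx
  refine ⟨μ, IsFractionRing.injective R (FractionRing R) ?_⟩
  rw [map_mul, hμ, map_ofNat]
  field_simp

section

variable {F K : Type} [Field F] [Field K] [Algebra F K]

variable (F K) in
def iotaHom : 𝓞 F →+* K := (algebraMap F K).comp (algebraMap (𝓞 F) F)

local notation "ι" => iotaHom F K

theorem iota_eq_iotaHom [NumberField F] (u : 𝓞 F) : iota F K u = ι u := rfl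

theorem iotaHom_injective : Function.Injective ι :=
  (algebraMap F K).injective.comp RingOfIntegers.coe_injective

theorem isIntegral_iotaHom (u : 𝓞 F) : IsIntegral ℤ (ι u) :=
  (RingOfIntegers.isIntegral_coe u).map (algebraMap F K).toIntAlgHom

variable (F) in
/-- `O_K = O_F θ + O_F`. -/
def GeneratesRingOfIntegers (θ : K) : Prop :=
  IsIntegral ℤ θ ∧ ∀ x : 𝓞 K, ∃ u v : 𝓞 F, (x : K) = ι u * θ + ι v

theorem GeneratesRingOfIntegers.unit_mul_add {θ : K} (h : GeneratesRingOfIntegers F θ)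
    (e : (𝓞 F)ˣ) (m : 𝓞 F) : GeneratesRingOfIntegers F (ι e * θ + ι m) := by
  refine ⟨((isIntegral_iotaHom _).mul h.1).add (isIntegral_iotaHom m), fun x => ?_⟩
  obtain ⟨u, v, hx⟩ := h.2 x
  refine ⟨u * ↑e⁻¹, v - u * ↑e⁻¹ * m, ?_⟩
  have he : ι ↑e⁻¹ * ι e = 1 := by rw [← map_mul, Units.inv_mul, map_one]
  simp only [map_mul, map_sub]
  linear_combination hx - ι u * θ * he

section Embeddings

variable {τ : F →+* ℝ} {σ : K →+* ℂ}

theorem im_map_iotaHom (hcompat : ∀ x : F, σ (algebraMap F K x) = (τ x : ℂ)) (u : 𝓞 F) :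
    (σ (ι u)).im = 0 := by
  simp [iotaHom, hcompat]

theorem im_map_iotaHom_mul (hcompat : ∀ x : F, σ (algebraMap F K x) = (τ x : ℂ))
    (u : 𝓞 F) (z : K) : (σ (ι u * z)).im = τ u * (σ z).im := by
  simp [iotaHom, hcompat]

theorem eq_zero_of_iotaHom_mul_eq (hcompat : ∀ x : F, σ (algebraMap F K x) = (τ x : ℂ))
    {z : K} (hz : (σ z).im ≠ 0) {p q : 𝓞 F} (h : ι q * z = ι p) : q = 0 := by
  have him := congrArg (fun y => (σ y).im) h
  simp only [im_map_iotaHom_mul hcompat, im_map_iotaHom hcompat] at him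
  exact RingOfIntegers.coe_eq_zero_iff.mp
    ((map_eq_zero τ).mp ((mul_eq_zero.mp him).resolve_right hz))

theorem GeneratesRingOfIntegers.exists_eq_unit_mul_add
    (hcompat : ∀ x : F, σ (algebraMap F K x) = (τ x : ℂ)) {θ θ' : K} (hθ : (σ θ).im ≠ 0)
    (h : GeneratesRingOfIntegers F θ) (h' : GeneratesRingOfIntegers F θ') :
    ∃ e : (𝓞 F)ˣ, ∃ m : 𝓞 F, θ' = ι e * θ + ι m := by
  obtain ⟨u', v', h1 : θ' = _⟩ := h.2 ⟨θ', h'.1⟩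
  obtain ⟨u, v, h2 : θ = _⟩ := h'.2 ⟨θ, h.1⟩
  have hcomp : ι (1 - u * u') * θ = ι (u * v' + v) := by
    simp only [map_sub, map_add, map_mul, map_one]
    linear_combination h2 + ι u * h1
  have hinv : u * u' = 1 := (sub_eq_zero.mp (eq_zero_of_iotaHom_mul_eq hcompat hθ hcomp)).symm
  exact ⟨⟨u', u, by rw [mul_comm, hinv], hinv⟩, v', h1⟩

theorem pos_of_eq_iotaHom_mul_add (hcompat : ∀ x : F, σ (algebraMap F K x) = (τ x : ℂ))
    {θ θ' : K} (hθ : 0 < (σ θ).im) (hθ' : 0 < (σ θ').im) {e m : 𝓞 F}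
    (h : θ' = ι e * θ + ι m) : 0 < τ e := by
  rw [h, map_add, add_im, im_map_iotaHom_mul hcompat, im_map_iotaHom hcompat, add_zero] at hθ'
  exact pos_of_mul_pos_left hθ' hθ.le

theorem generatesRingOfIntegers_iff (hcompat : ∀ x : F, σ (algebraMap F K x) = (τ x : ℂ))
    {θ θ' : K} (hθ : 0 < (σ θ).im) (hθ' : 0 < (σ θ').im) (h : GeneratesRingOfIntegers F θ) :
    GeneratesRingOfIntegers F θ' ↔ ∃ e : (𝓞 F)ˣ, 0 < τ e ∧ ∃ m : 𝓞 F, θ' = ι e * θ + ι m := by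
  constructor
  · intro h'
    obtain ⟨e, m, he⟩ := h.exists_eq_unit_mul_add hcompat hθ.ne' h'
    exact ⟨e, pos_of_eq_iotaHom_mul_add hcompat hθ hθ' he, m, he⟩
  · rintro ⟨e, -, m, rfl⟩
    exact h.unit_mul_add e m

theorem sq_two_mul_add_eq_disc {θ : K} {b c : 𝓞 F} (h : θ ^ 2 + ι b * θ + ι c = 0) :
    (2 * θ + ι b) ^ 2 = ι (b ^ 2 - 4 * c) := by
  simp only [map_sub, map_mul, map_pow, map_ofNat]
  linear_combination 4 * h

theorem im_map_two_mul_add (hcompat : ∀ x : F, σ (algebraMap F K x) = (τ x : ℂ))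
    (θ : K) (b : 𝓞 F) : (σ (2 * θ + ι b)).im = 2 * (σ θ).im := by
  rw [map_add, map_mul, map_ofNat, add_im, im_map_iotaHom hcompat, add_zero]
  simp

theorem disc_eq_of_eq_iotaHom_mul_add [CharZero F]
    (hcompat : ∀ x : F, σ (algebraMap F K x) = (τ x : ℂ)) {θ θ' : K} {b c b' c' : 𝓞 F}
    (hθ : θ ^ 2 + ι b * θ + ι c = 0) (hθ' : θ' ^ 2 + ι b' * θ' + ι c' = 0)
    (hθim : (σ θ).im ≠ 0) {e m : 𝓞 F} (he : e ≠ 0) (h : θ' = ι e * θ + ι m) :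
    b' ^ 2 - 4 * c' = e ^ 2 * (b ^ 2 - 4 * c) := by
  have hδ := sq_two_mul_add_eq_disc hθ
  have hδ' := sq_two_mul_add_eq_disc hθ'
  have hδim : (σ (2 * θ + ι b)).im ≠ 0 := by
    rw [im_map_two_mul_add hcompat]
    exact mul_ne_zero two_ne_zero hθim
  set w := 2 * m + b' - e * b
  have hδw : 2 * θ' + ι b' = ι e * (2 * θ + ι b) + ι w := by
    simp only [w, map_sub, map_add, map_mul, map_ofNat]
    linear_combination 2 * h
  -- Squaring `δ' = e δ + w` leaves the cross term `2 e w δ` as the only one outside `O_F`.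
  have hcross : ι (2 * e * w) * (2 * θ + ι b) =
      ι (b' ^ 2 - 4 * c' - e ^ 2 * (b ^ 2 - 4 * c) - w ^ 2) := by
    simp only [map_sub, map_mul, map_pow, map_ofNat] at hδ hδ' ⊢
    linear_combination hδ' - (2 * θ' + ι b' + ι e * (2 * θ + ι b) + ι w) * hδw - ι e ^ 2 * hδ
  have hw : w = 0 := by
    simpa [he] using eq_zero_of_iotaHom_mul_eq hcompat hδim hcross
  apply iotaHom_injective (K := K)
  rw [← hδ', hδw, hw, map_mul, map_pow, ← hδ, map_zero]
  ring

theorem exists_eq_iotaHom_mul_add_of_disc_eq [NumberField F]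
    (hcompat : ∀ x : F, σ (algebraMap F K x) = (τ x : ℂ)) {θ θ' : K} {b c b' c' : 𝓞 F}
    (hθ : θ ^ 2 + ι b * θ + ι c = 0) (hθ' : θ' ^ 2 + ι b' * θ' + ι c' = 0)
    (hθim : 0 < (σ θ).im) (hθ'im : 0 < (σ θ').im) {e : 𝓞 F} (he : 0 < τ e)
    (hdisc : b' ^ 2 - 4 * c' = e ^ 2 * (b ^ 2 - 4 * c)) :
    ∃ m : 𝓞 F, θ' = ι e * θ + ι m := by
  have hδ := sq_two_mul_add_eq_disc hθ
  have hδ' := sq_two_mul_add_eq_disc hθ'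
  -- `δ'² = e² δ²` for `δ = 2θ + b`, `δ' = 2θ' + b'`, and `δ' + e δ` lies in the upper half-plane.
  have hsum : 2 * θ' + ι b' + ι e * (2 * θ + ι b) ≠ 0 := by
    intro h0
    have him := congrArg (fun y => (σ y).im) h0
    rw [map_add, add_im, im_map_two_mul_add hcompat, im_map_iotaHom_mul hcompat,
      im_map_two_mul_add hcompat, map_zero, zero_im] at him
    nlinarith
  have hδeq : 2 * θ' + ι b' = ι e * (2 * θ + ι b) := by
    have hprod : (2 * θ' + ι b' - ι e * (2 * θ + ι b)) *
        (2 * θ' + ι b' + ι e * (2 * θ + ι b)) = 0 := by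
      have hdiscK := congrArg ι hdisc
      simp only [map_sub, map_mul, map_pow, map_ofNat] at hδ hδ' hdiscK
      linear_combination hδ' - ι e ^ 2 * hδ + hdiscK
    exact sub_eq_zero.mp ((mul_eq_zero.mp hprod).resolve_right hsum)
  obtain ⟨μ, hμ⟩ : 2 ∣ e * b - b' :=
    two_dvd_of_sq_add_two_mul_eq (b := b') (c := e ^ 2 * c - c') (by linear_combination -hdisc)
  have := σ.charZero
  refine ⟨μ, mul_left_cancel₀ (two_ne_zero : (2 : K) ≠ 0) ?_⟩
  have hμK := congrArg ι hμ
  simp only [map_sub, map_mul, map_ofNat] at hμK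
  linear_combination hδeq + hμK

theorem exists_eq_iotaHom_mul_add_iff [NumberField F]
    (hcompat : ∀ x : F, σ (algebraMap F K x) = (τ x : ℂ)) {θ θ' : K} {b c b' c' : 𝓞 F}
    (hθ : θ ^ 2 + ι b * θ + ι c = 0) (hθ' : θ' ^ 2 + ι b' * θ' + ι c' = 0)
    (hθim : 0 < (σ θ).im) (hθ'im : 0 < (σ θ').im) {e : 𝓞 F} (he : 0 < τ e) :
    (∃ m : 𝓞 F, θ' = ι e * θ + ι m) ↔ b' ^ 2 - 4 * c' = e ^ 2 * (b ^ 2 - 4 * c) := by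
  refine ⟨fun ⟨m, hm⟩ => ?_, exists_eq_iotaHom_mul_add_of_disc_eq hcompat hθ hθ' hθim hθ'im he⟩
  have he0 : e ≠ 0 := by rintro rfl; simp at he
  exact disc_eq_of_eq_iotaHom_mul_add hcompat hθ hθ' hθim.ne' he0 hm

end Embeddings

end

theorem stmt4_general (F K : Type) [Field F] [Field K] [NumberField F]
    [Algebra F K] (τ : F →+* ℝ) (σ : K →+* ℂ)
    (hcompat : ∀ x : F, σ (algebraMap F K x) = (τ x : ℂ))
    -- ω_K : generator of O_K over O_F lying in the upper half-plane
    (ωK : K) (hωKint : IsIntegral ℤ ωK) (hωKim : 0 < (σ ωK).im)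
    (hgen : ∀ x : 𝓞 K, ∃ u v : 𝓞 F, (x : K) = iota F K u * ωK + iota F K v)
    -- minimal polynomial x² + b_K x + c_K of ω_K over F, and d_K
    (bK cK : 𝓞 F) (hmin : ωK ^ 2 + iota F K bK * ωK + iota F K cK = 0)
    (dK : 𝓞 F) (hdK : dK = bK ^ 2 - 4 * cK)
    -- the form Q = ax² + bxy + cy², primitive, a > 0, with negative discriminant
    (a b c : 𝓞 F)
    (hapos : 0 < τ (a : F))
    (ω : K) (hω : IsFormRoot F K σ a b c ω) :
    (IsIntegral ℤ (iota F K a * ω) ∧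
      ∀ x : 𝓞 K, ∃ u v : 𝓞 F, (x : K) = iota F K u * (iota F K a * ω) + iota F K v)
    ↔ ∃ ε : (𝓞 F)ˣ, 0 < τ ((ε : 𝓞 F) : F) ∧
        b ^ 2 - 4 * a * c = (ε : 𝓞 F) ^ 2 * dK := by
  obtain ⟨hroot, hωim⟩ := hω
  simp only [iota_eq_iotaHom] at hroot hmin hgen
  have hθ : (iotaHom F K a * ω) ^ 2 + iotaHom F K b * (iotaHom F K a * ω)
      + iotaHom F K (a * c) = 0 := by
    rw [map_mul]
    linear_combination iotaHom F K a * hroot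
  have hθim : 0 < (σ (iotaHom F K a * ω)).im := by
    rw [im_map_iotaHom_mul hcompat]
    positivity
  change GeneratesRingOfIntegers F (iotaHom F K a * ω) ↔ _
  rw [generatesRingOfIntegers_iff hcompat hωKim hθim ⟨hωKint, hgen⟩]
  refine exists_congr fun e => and_congr_right fun he => ?_
  rw [exists_eq_iotaHom_mul_add_iff hcompat hmin hθ hωKim hθim he, hdK, mul_assoc]

theorem stmt4 (F K : Type) [Field F] [Field K] [NumberField F] [NumberField K]
    [Algebra F K] (τ : F →+* ℝ) (σ : K →+* ℂ)
    (hcompat : ∀ x : F, σ (algebraMap F K x) = (τ x : ℂ))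
    (hF_totallyReal : ∀ φ : F →+* ℂ, ∀ x : F, (φ x).im = 0)
    (hquadratic : Module.finrank F K = 2)
    (hclass : NumberField.classNumber F = 1)
    -- ω_K : generator of O_K over O_F lying in the upper half-plane
    (ωK : K) (hωKint : IsIntegral ℤ ωK) (hωKim : 0 < (σ ωK).im)
    (hgen : ∀ x : 𝓞 K, ∃ u v : 𝓞 F, (x : K) = iota F K u * ωK + iota F K v)
    -- minimal polynomial x² + b_K x + c_K of ω_K over F, and d_K
    (bK cK : 𝓞 F) (hmin : ωK ^ 2 + iota F K bK * ωK + iota F K cK = 0)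
    (dK : 𝓞 F) (hdK : dK = bK ^ 2 - 4 * cK)
    -- the form Q = ax² + bxy + cy², primitive, a > 0, with negative discriminant
    (a b c : 𝓞 F)
    (hprim : ∀ d : 𝓞 F, d ∣ a → d ∣ b → d ∣ c → IsUnit d)
    (hapos : 0 < τ (a : F))
    (hdisc : τ ((b ^ 2 - 4 * a * c : 𝓞 F) : F) < 0)
    (ω : K) (hω : IsFormRoot F K σ a b c ω) :
    (IsIntegral ℤ (iota F K a * ω) ∧
      ∀ x : 𝓞 K, ∃ u v : 𝓞 F, (x : K) = iota F K u * (iota F K a * ω) + iota F K v)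
    ↔ ∃ ε : (𝓞 F)ˣ, 0 < τ ((ε : 𝓞 F) : F) ∧
        b ^ 2 - 4 * a * c = (ε : 𝓞 F) ^ 2 * dK :=
  stmt4_general F K τ σ hcompat ωK hωKint hωKim hgen bK cK hmin dK hdK a b c hapos ω hω
end
end

section
/- Let Q = ax²+bxy+cy² ∈ Q_F(1, d_K) and let 𝔞 = O_F·ω_Q + O_F. Then 𝔞 is a fractional ideal of O_K. -/
/-!
Both `2 ω_K + b_K` and `2 a ω + b` are square roots of `d_K` with positive imaginary part
under `σ`, so they are equal. Hence `a ω = ω_K + m` with `m = (b_K - b) / 2`, and `m ∈ O_F`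
because `a ω`, a root of `X² + b X + a c`, is integral. Consequently `ω_K = a ω - m` and
`ω_K ω = -(b + m) ω - c` lie in `𝔞 = O_F ω + O_F`, so `𝔞` is stable under
`O_K = O_F ω_K + O_F`; it is therefore the finitely generated `O_K`-module `O_K ω + O_K`.
-/

open NumberField Complex Polynomial Submodule

noncomputable section

def IsFormN (F : Type) [Field F] [NumberField F] (τ : F →+* ℝ) (N : ℕ)
    (dK : 𝓞 F) (a b c : 𝓞 F) : Prop :=
  (∀ d : 𝓞 F, d ∣ a → d ∣ b → d ∣ c → IsUnit d) ∧
  0 < τ (a : F) ∧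
  b ^ 2 - 4 * a * c = dK ∧
  (∀ d : 𝓞 F, d ∣ a → d ∣ (N : 𝓞 F) → IsUnit d)

theorem isIntegral_of_sq_add_mul_add_eq_zero {R A : Type*} [CommRing R] [CommRing A]
    [Algebra R A] {B C y : A} (hB : IsIntegral R B) (hC : IsIntegral R C)
    (h : y ^ 2 + B * y + C = 0) : IsIntegral R y := by
  let B' : integralClosure R A := ⟨B, hB⟩
  let C' : integralClosure R A := ⟨C, hC⟩
  have hmonic : (X ^ 2 + Polynomial.C B' * X + Polynomial.C C').Monic := by
    have : degree (Polynomial.C B' * X + Polynomial.C C') < 2 :=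
      degree_linear_le.trans_lt (by norm_num)
    simpa [add_assoc] using monic_X_pow_add this
  refine isIntegral_trans y ⟨_, hmonic, ?_⟩
  simp only [eval₂_add, eval₂_mul, eval₂_pow, eval₂_X, eval₂_C]
  exact h

theorem eq_of_sq_eq_of_im_pos {A : Type*} [CommRing A] [NoZeroDivisors A] (σ : A →+* ℂ)
    {x y : A} (h : x ^ 2 = y ^ 2) (hx : 0 < (σ x).im) (hy : 0 < (σ y).im) : x = y := by
  refine (sq_eq_sq_iff_eq_or_eq_neg.mp h).resolve_right fun hxy => ?_
  rw [hxy, map_neg, neg_im] at hx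
  linarith

section SpanPair

variable {R S A : Type*} [CommRing R] [CommRing S] [CommRing A] [Algebra R S] [Algebra R A]
  [Algebra S A] [IsScalarTower R S A]

theorem mul_mem_span_pair_one {ω y x : A} (hy : y ∈ span R {ω, 1})
    (hyω : y * ω ∈ span R {ω, 1}) (hx : x ∈ span R {ω, 1}) : y * x ∈ span R {ω, 1} := by
  obtain ⟨u, v, rfl⟩ := mem_span_pair.mp hx
  have : y * (u • ω + v • 1) = u • (y * ω) + v • y := by
    simp only [mul_add, mul_smul_comm, mul_one]
  rw [this]
  exact add_mem (smul_mem _ u hyω) (smul_mem _ v hy)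

theorem restrictScalars_span_pair_one_eq {ω θ : A}
    (hgen : ∀ s : S, algebraMap S A s ∈ span R {θ, 1})
    (hθ : θ ∈ span R {ω, 1}) (hθω : θ * ω ∈ span R {ω, 1}) :
    (span S {ω, 1}).restrictScalars R = span R {ω, 1} := by
  refine le_antisymm (fun x hx => ?_) (span_le_restrictScalars R S _)
  have hmul : ∀ z ∈ span R {θ, 1}, ∀ x ∈ span R {ω, 1}, z * x ∈ span R {ω, 1} := by
    intro z hz x hx
    obtain ⟨p, q, rfl⟩ := mem_span_pair.mp hz
    refine mul_mem_span_pair_one ?_ ?_ hx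
    · simpa using add_mem (smul_mem _ p hθ) (smul_mem _ q (subset_span (by simp)))
    · simpa [add_mul, smul_mul_assoc] using
        add_mem (smul_mem _ p hθω) (smul_mem _ q (subset_span (by simp)))
  induction hx using span_induction with
  | mem x hx => exact subset_span hx
  | zero => exact zero_mem _
  | add x y _ _ hx hy => exact add_mem hx hy
  | smul s x _ hx => simpa only [Algebra.smul_def] using hmul _ (hgen s) x hx

end SpanPair

section FormRoot

variable {F K : Type} [Field F] [Field K] [NumberField F] [Algebra F K]

theorem iota_eq_algebraMap (u : 𝓞 F) : iota F K u = algebraMap (𝓞 F) K u := rfl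

theorem isIntegral_iota (u : 𝓞 F) : IsIntegral ℤ (iota F K u) :=
  u.isIntegral_coe.algebraMap

theorem mem_span_pair_one_iff {x ω : K} :
    x ∈ span (𝓞 F) {ω, 1} ↔ ∃ u v : 𝓞 F, x = iota F K u * ω + iota F K v := by
  simp only [mem_span_pair, Algebra.smul_def, mul_one, iota_eq_algebraMap, eq_comm]

theorem two_mul_add_iota_eq {τ : F →+* ℝ} {σ : K →+* ℂ}
    (hcompat : ∀ x : F, σ (algebraMap F K x) = (τ x : ℂ))
    {ωK : K} (hωKim : 0 < (σ ωK).im) {bK cK : 𝓞 F}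
    (hmin : ωK ^ 2 + iota F K bK * ωK + iota F K cK = 0)
    {a b c : 𝓞 F} (hapos : 0 < τ (a : F)) (hdisc : b ^ 2 - 4 * a * c = bK ^ 2 - 4 * cK)
    {ω : K} (hω : IsFormRoot F K σ a b c ω) :
    2 * ωK + iota F K bK = 2 * iota F K a * ω + iota F K b := by
  obtain ⟨hroot, him⟩ := hω
  have hσ : ∀ u : 𝓞 F, σ (iota F K u) = (τ (u : F) : ℂ) := fun u => hcompat u
  have hdisc' := congrArg (algebraMap (𝓞 F) K) hdisc
  simp only [map_sub, map_mul, map_pow, map_ofNat, ← iota_eq_algebraMap] at hdisc'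
  refine eq_of_sq_eq_of_im_pos σ ?_ ?_ ?_
  · linear_combination 4 * hmin - 4 * iota F K a * hroot - hdisc'
  · simpa [hσ, map_ofNat] using hωKim
  · simpa [hσ, map_ofNat] using mul_pos (mul_pos two_pos hapos) him

theorem exists_iota_eq_mul_sub {ωK : K} (hωKint : IsIntegral ℤ ωK) {σ : K →+* ℂ}
    {a b c bK : 𝓞 F} {ω : K} (hω : IsFormRoot F K σ a b c ω)
    (heq : 2 * ωK + iota F K bK = 2 * iota F K a * ω + iota F K b) :
    ∃ m : 𝓞 F, iota F K m = iota F K a * ω - ωK := by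
  have haω : IsIntegral ℤ (iota F K a * ω) := by
    refine isIntegral_of_sq_add_mul_add_eq_zero (isIntegral_iota b) (isIntegral_iota (a * c)) ?_
    rw [show iota F K (a * c) = iota F K a * iota F K c from map_mul (algebraMap (𝓞 F) K) a c]
    linear_combination iota F K a * hω.1
  have := charZero_of_injective_algebraMap (algebraMap F K).injective
  have hhalf : iota F K a * ω - ωK = algebraMap F K (((bK : F) - b) / 2) := by
    rw [map_div₀, map_sub, map_ofNat, eq_div_iff two_ne_zero]
    unfold iota at heq ⊢
    linear_combination -heq
  have hint : IsIntegral ℤ (((bK : F) - b) / 2) :=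
    (isIntegral_algebraMap_iff (algebraMap F K).injective).mp (hhalf ▸ haω.sub hωKint)
  exact ⟨⟨_, hint⟩, hhalf.symm⟩

end FormRoot

theorem stmt5_general (F K : Type) [Field F] [Field K] [NumberField F] [NumberField K]
    [Algebra F K] (τ : F →+* ℝ) (σ : K →+* ℂ)
    (hcompat : ∀ x : F, σ (algebraMap F K x) = (τ x : ℂ))
    (ωK : K) (hωKint : IsIntegral ℤ ωK) (hωKim : 0 < (σ ωK).im)
    (hgen : ∀ x : 𝓞 K, ∃ u v : 𝓞 F, (x : K) = iota F K u * ωK + iota F K v)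
    (bK cK : 𝓞 F) (hmin : ωK ^ 2 + iota F K bK * ωK + iota F K cK = 0)
    (dK : 𝓞 F) (hdK : dK = bK ^ 2 - 4 * cK)
    (a b c : 𝓞 F) (hQ : IsFormN F τ 1 dK a b c)
    (ω : K) (hω : IsFormRoot F K σ a b c ω) :
    ∃ I : FractionalIdeal (nonZeroDivisors (𝓞 K)) K,
      ∀ x : K, x ∈ (I : Submodule (𝓞 K) K) ↔
        ∃ u v : 𝓞 F, x = iota F K u * ω + iota F K v := by
  obtain ⟨-, hapos, hdisc, -⟩ := hQ
  obtain ⟨m, hm⟩ := exists_iota_eq_mul_sub hωKint hω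
    (two_mul_add_iota_eq hcompat hωKim hmin hapos (hdisc.trans hdK) hω)
  have hωK : ωK ∈ span (𝓞 F) {ω, 1} :=
    mem_span_pair_one_iff.mpr ⟨a, -m, by
      rw [iota_eq_algebraMap (-m), map_neg, ← iota_eq_algebraMap, hm]; ring⟩
  have hωKω : ωK * ω ∈ span (𝓞 F) {ω, 1} := by
    refine mem_span_pair_one_iff.mpr ⟨-(b + m), -c, ?_⟩
    have hroot := hω.1
    simp only [iota_eq_algebraMap, map_neg, map_add] at hm hroot ⊢
    linear_combination hroot + ω * hm
  have hspan := restrictScalars_span_pair_one_eq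
    (fun s => mem_span_pair_one_iff.mpr (hgen s)) hωK hωKω
  refine ⟨⟨span (𝓞 K) {ω, 1}, FractionalIdeal.isFractional_of_fg (fg_span (by simp))⟩, fun x => ?_⟩
  rw [← mem_span_pair_one_iff, ← hspan]
  rfl

theorem stmt5 (F K : Type) [Field F] [Field K] [NumberField F] [NumberField K]
    [Algebra F K] (τ : F →+* ℝ) (σ : K →+* ℂ)
    (hcompat : ∀ x : F, σ (algebraMap F K x) = (τ x : ℂ))
    (hF_totallyReal : ∀ φ : F →+* ℂ, ∀ x : F, (φ x).im = 0)
    (hquadratic : Module.finrank F K = 2)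
    (hclass : NumberField.classNumber F = 1)
    (ωK : K) (hωKint : IsIntegral ℤ ωK) (hωKim : 0 < (σ ωK).im)
    (hgen : ∀ x : 𝓞 K, ∃ u v : 𝓞 F, (x : K) = iota F K u * ωK + iota F K v)
    (bK cK : 𝓞 F) (hmin : ωK ^ 2 + iota F K bK * ωK + iota F K cK = 0)
    (dK : 𝓞 F) (hdK : dK = bK ^ 2 - 4 * cK)
    (a b c : 𝓞 F) (hQ : IsFormN F τ 1 dK a b c)
    (ω : K) (hω : IsFormRoot F K σ a b c ω) :
    ∃ I : FractionalIdeal (nonZeroDivisors (𝓞 K)) K,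
      ∀ x : K, x ∈ (I : Submodule (𝓞 K) K) ↔
        ∃ u v : 𝓞 F, x = iota F K u * ω + iota F K v :=
  stmt5_general F K τ σ hcompat ωK hωKint hωKim hgen bK cK hmin dK hdK a b c hQ ω hω
end
end

section
/- Let Q = ax²+bxy+cy² ∈ Q_F(1, d_K) and 𝔞 = O_F·ω_Q + O_F. Then 𝔞 is relatively prime to N·O_K if and only if gcd(a, N) = 1 in O_F. -/
open NumberField Complex

noncomputable section

/-- A fractional ideal `I` is relatively prime to `N·O_K` : its numerator and
denominator ideals can be chosen coprime to `N·O_K`. -/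
def CoprimeToN (K : Type) [Field K] [NumberField K] (N : ℕ)
    (I : FractionalIdeal (nonZeroDivisors (𝓞 K)) K) : Prop :=
  ∃ b₁ b₂ : Ideal (𝓞 K),
    IsCoprime b₁ (Ideal.span {(N : 𝓞 K)}) ∧
    IsCoprime b₂ (Ideal.span {(N : 𝓞 K)}) ∧
    I * (b₂ : FractionalIdeal (nonZeroDivisors (𝓞 K)) K)
      = (b₁ : FractionalIdeal (nonZeroDivisors (𝓞 K)) K)

/-! Put `α = a ω`, a root of `X² + b X + a c`, so that `a I = (a, α)` and, since
`gcd(a, b, c) = 1`, `(a, α) (a, α + b) = (a)`. If `gcd(a, N) = 1`, then `I (a) = (a, α)` with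
both ideals containing `a`. Conversely, `I 𝔟₂ = 𝔟₁` gives `𝔟₂ = (a, α + b) 𝔟₁` after
cancelling `(a, α)`, so `(a, α + b)` is coprime to `N`. For a common divisor `d` of `a` and `N`
this puts `α` in `d O_K`; then `α / d ∉ F` is integral with minimal polynomial
`X² + (b/d) X + ac/d²`, whose coefficients lie in the integrally closed `O_F`. So `d ∣ b`,
`(a, α + b) ⊆ d O_K`, and `d` is a unit. -/

open Polynomial

theorem Ideal.span_eq_top_of_forall_dvd_isUnit {R : Type*} [CommRing R] [IsPrincipalIdealRing R]
    {s : Set R} (h : ∀ d : R, (∀ x ∈ s, d ∣ x) → IsUnit d) : Ideal.span s = ⊤ := by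
  obtain ⟨g, hg⟩ := Submodule.IsPrincipal.principal (Ideal.span s)
  rw [hg, Ideal.submodule_span_eq, Ideal.span_singleton_eq_top]
  refine h g fun x hx => ?_
  rw [← Ideal.mem_span_singleton, ← Ideal.submodule_span_eq, ← hg]
  exact Ideal.subset_span hx

section Quadratic

variable {S : Type*} [CommRing S] {a b c α : S}

theorem Ideal.span_pair_mul_span_pair_add_eq_span_singleton
    (hα : α ^ 2 + b * α + a * c = 0) (habc : Ideal.span {a, b, c} = ⊤) :
    Ideal.span {a, α} * Ideal.span {a, α + b} = Ideal.span {a} := by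
  apply le_antisymm
  · rw [Ideal.span_pair_mul_span_pair, Ideal.span_le]
    rintro x (rfl | rfl | rfl | rfl) <;> rw [SetLike.mem_coe, Ideal.mem_span_singleton]
    · exact dvd_mul_right a a
    · exact dvd_mul_right a _
    · exact dvd_mul_left a α
    · exact ⟨-c, by linear_combination hα⟩
  · calc Ideal.span {a} = Ideal.span {a} * Ideal.span {a, b, c} := by rw [habc, Ideal.mul_top]
      _ ≤ _ := by
        have hmem : ∀ {x y : S}, x ∈ ({a, α} : Set S) → y ∈ ({a, α + b} : Set S) →
            x * y ∈ Ideal.span {a, α} * Ideal.span {a, α + b} := fun hx hy =>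
          Ideal.mul_mem_mul (Ideal.subset_span hx) (Ideal.subset_span hy)
        rw [Ideal.span_mul_span', Set.singleton_mul, Set.image_insert_eq, Set.image_insert_eq,
          Set.image_singleton, Ideal.span_le, Set.insert_subset_iff, Set.insert_subset_iff,
          Set.singleton_subset_iff]
        refine ⟨hmem (by simp) (by simp), ?_, ?_⟩
        · rw [SetLike.mem_coe, show a * b = a * (α + b) - α * a by ring]
          exact sub_mem (hmem (by simp) (by simp)) (hmem (by simp) (by simp))
        · rw [SetLike.mem_coe, show a * c = -(α * (α + b)) by linear_combination hα]
          exact neg_mem (hmem (by simp) (by simp))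

theorem Ideal.mem_span_singleton_sup_of_isCoprime_span_pair {J : Ideal S}
    (hα : α ^ 2 + b * α + a * c = 0) (hJ : IsCoprime (Ideal.span {a, α + b}) J) :
    α ∈ Ideal.span {a} ⊔ J := by
  obtain ⟨y, hy, w, hw, hyw⟩ :=
    Submodule.mem_sup.mp (Ideal.isCoprime_iff_sup_eq.mp hJ ▸ Submodule.mem_top (x := (1 : S)))
  obtain ⟨s, t, rfl⟩ := Ideal.mem_span_pair.mp hy
  rw [show α = (s * α - t * c) * a + α * w by linear_combination (-α) * hyw + t * hα]
  exact add_mem (Ideal.mem_sup_left (Ideal.mem_span_singleton.mpr (dvd_mul_left _ _)))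
    (Ideal.mem_sup_right (J.mul_mem_left _ hw))

end Quadratic

theorem isIntegral_algebraMap_mul_of_quadratic {R A : Type*} [CommRing R] [CommRing A] [Algebra R A]
    {a b c : R} {x : A}
    (h : algebraMap R A a * x ^ 2 + algebraMap R A b * x + algebraMap R A c = 0) :
    IsIntegral R (algebraMap R A a * x) := by
  refine ⟨X ^ 2 + C b * X + C (a * c), by monicity!, ?_⟩
  simp only [eval₂_add, eval₂_mul, eval₂_pow, eval₂_X, eval₂_C, map_mul]
  linear_combination algebraMap R A a * h

section IntegrallyClosed

variable {R F K : Type*} [CommRing R] [IsDomain R] [IsIntegrallyClosed R] [Field F] [Algebra R F]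
  [IsFractionRing R F] [Field K] [Algebra F K] [Algebra R K] [IsScalarTower R F K]

theorem IsIntegral.coeff_mem_range_of_quadratic {y : K} (hy : IsIntegral R y)
    (hyF : y ∉ (algebraMap F K).range) {p q : F}
    (h : y ^ 2 + algebraMap F K p * y + algebraMap F K q = 0) : p ∈ (algebraMap R F).range := by
  have hmin : minpoly F y = X ^ 2 + C p * X + C q := by
    have hdeg : (minpoly F y).natDegree ≠ 1 := mt minpoly.natDegree_eq_one_iff.mp hyF
    have hpos := minpoly.natDegree_pos (hy.tower_top (A := F))
    refine (eq_of_monic_of_dvd_of_natDegree_le (minpoly.monic (hy.tower_top (A := F)))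
      (by monicity!) (minpoly.dvd F y (by simpa [Algebra.smul_def] using h)) ?_).symm
    rw [show (X ^ 2 + C p * X + C q : F[X]).natDegree = 2 by compute_degree!]
    omega
  have := congrArg (coeff · 1) (minpoly.isIntegrallyClosed_eq_field_fractions' F hy)
  simp only [hmin, coeff_map] at this
  exact ⟨_, by simpa using this.symm⟩

theorem IsIntegral.dvd_of_algebraMap_mul_eq {x y : K} {b e d : R} (hd : d ≠ 0)
    (hx : x ^ 2 + algebraMap R K b * x + algebraMap R K e = 0) (hxF : x ∉ (algebraMap F K).range)
    (hy : IsIntegral R y) (hxy : algebraMap R K d * y = x) : d ∣ b := by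
  have hdF : algebraMap R F d ≠ 0 := (map_ne_zero_iff _ (IsFractionRing.injective R F)).mpr hd
  have hdK : algebraMap R K d ≠ 0 := by
    rwa [IsScalarTower.algebraMap_apply R F K, _root_.map_ne_zero]
  have hyF : y ∉ (algebraMap F K).range := by
    rintro ⟨f, rfl⟩
    exact hxF ⟨algebraMap R F d * f, by rw [map_mul, ← IsScalarTower.algebraMap_apply, hxy]⟩
  obtain ⟨r, hr⟩ := hy.coeff_mem_range_of_quadratic hyF
    (p := algebraMap R F b / algebraMap R F d) (q := algebraMap R F e / algebraMap R F d ^ 2) (by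
      simp only [map_div₀, map_pow, ← IsScalarTower.algebraMap_apply]
      subst hxy
      field_simp
      linear_combination hx)
  refine ⟨r, IsFractionRing.injective R F ?_⟩
  rw [map_mul, hr]
  field_simp

end IntegrallyClosed

open scoped nonZeroDivisors in
theorem FractionalIdeal.coeIdeal_span_pair_eq_spanSingleton_mul {R S K : Type*} [CommRing R]
    [CommRing S] [Field K] [Algebra R S] [Algebra S K] [IsFractionRing S K] [Algebra R K]
    [IsScalarTower R S K] {ω : K} {I : FractionalIdeal S⁰ K}
    (hI : ∀ x : K, x ∈ (I : Submodule S K) ↔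
      ∃ u v : R, x = algebraMap R K u * ω + algebraMap R K v)
    {a : R} {α : S} (hα : algebraMap S K α = algebraMap R K a * ω) :
    (Ideal.span {algebraMap R S a, α} : FractionalIdeal S⁰ K) =
      FractionalIdeal.spanSingleton S⁰ (algebraMap R K a) * I := by
  have h1 : (1 : K) ∈ (I : Submodule S K) := (hI 1).mpr ⟨0, 1, by simp⟩
  have hω : ω ∈ (I : Submodule S K) := (hI ω).mpr ⟨1, 0, by simp⟩
  ext x
  rw [FractionalIdeal.mem_coeIdeal, FractionalIdeal.mem_singleton_mul]
  constructor
  · rintro ⟨y, hy, rfl⟩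
    obtain ⟨s, t, rfl⟩ := Ideal.mem_span_pair.mp hy
    refine ⟨algebraMap S K s + algebraMap S K t * ω, ?_, ?_⟩
    · simpa [Algebra.smul_def] using add_mem (Submodule.smul_mem _ s h1) (Submodule.smul_mem _ t hω)
    · simp only [map_add, map_mul, hα, ← IsScalarTower.algebraMap_apply]
      ring
  · rintro ⟨y, hy, rfl⟩
    obtain ⟨u, v, rfl⟩ := (hI y).mp hy
    refine ⟨algebraMap R S v * algebraMap R S a + algebraMap R S u * α,
      Ideal.mem_span_pair.mpr ⟨_, _, rfl⟩, ?_⟩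
    simp only [map_add, map_mul, hα, ← IsScalarTower.algebraMap_apply]
    ring

open scoped nonZeroDivisors in
theorem coprimeToN_of_isRelPrime {F : Type*} {K : Type} [Field F] [Field K] [NumberField K]
    [Algebra F K] [IsPrincipalIdealRing (𝓞 F)] {N : ℕ} {a : 𝓞 F} {α : 𝓞 K}
    {I : FractionalIdeal (𝓞 K)⁰ K}
    (hIa : (Ideal.span {algebraMap (𝓞 F) (𝓞 K) a, α} : FractionalIdeal (𝓞 K)⁰ K) =
      FractionalIdeal.spanSingleton (𝓞 K)⁰ (algebraMap (𝓞 F) K a) * I)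
    (h : IsRelPrime a (N : 𝓞 F)) : CoprimeToN K N I := by
  have hcop : IsCoprime (Ideal.span {algebraMap (𝓞 F) (𝓞 K) a}) (Ideal.span {(N : 𝓞 K)}) := by
    rw [Ideal.isCoprime_span_singleton_iff]
    simpa using (isRelPrime_iff_isCoprime.mp h).map (algebraMap (𝓞 F) (𝓞 K))
  refine ⟨Ideal.span {algebraMap (𝓞 F) (𝓞 K) a, α}, _,
    hcop.of_isCoprime_of_dvd_left (Ideal.dvd_iff_le.mpr (Ideal.span_mono ?_)), hcop, ?_⟩
  · exact Set.singleton_subset_iff.mpr (Set.mem_insert _ _)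
  · rw [hIa, FractionalIdeal.coeIdeal_span_singleton, mul_comm]
    rfl

section RingOfIntegers

open scoped nonZeroDivisors

variable {F : Type*} {K : Type} [Field F] [Field K] [NumberField F] [Algebra F K]

theorem isRelPrime_of_isCoprime_span_pair {a b c m : 𝓞 F} {α : 𝓞 K} (ha : a ≠ 0)
    (hα : α ^ 2 + algebraMap (𝓞 F) (𝓞 K) b * α +
      algebraMap (𝓞 F) (𝓞 K) a * algebraMap (𝓞 F) (𝓞 K) c = 0)
    (hαF : (α : K) ∉ (algebraMap F K).range)
    (hcop : IsCoprime (Ideal.span {algebraMap (𝓞 F) (𝓞 K) a, α + algebraMap (𝓞 F) (𝓞 K) b})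
      (Ideal.span {algebraMap (𝓞 F) (𝓞 K) m})) :
    IsRelPrime a m := by
  intro d hda hdm
  have hd : d ≠ 0 := by rintro rfl; exact ha (zero_dvd_iff.mp hda)
  set J := Ideal.span {algebraMap (𝓞 F) (𝓞 K) d}
  have hJ : ∀ {x : 𝓞 F}, d ∣ x → algebraMap (𝓞 F) (𝓞 K) x ∈ J := fun h =>
    Ideal.mem_span_singleton.mpr (map_dvd _ h)
  obtain ⟨γ, hγ⟩ : algebraMap (𝓞 F) (𝓞 K) d ∣ α := Ideal.mem_span_singleton.mp <|
    sup_le (J.span_singleton_le_iff_mem.mpr (hJ hda)) (J.span_singleton_le_iff_mem.mpr (hJ hdm))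
      (Ideal.mem_span_singleton_sup_of_isCoprime_span_pair hα hcop)
  have hdb : d ∣ b := by
    refine IsIntegral.dvd_of_algebraMap_mul_eq (F := F) (y := (γ : K)) (e := a * c) hd ?_ hαF
      (γ.isIntegral_coe.tower_top) ?_
    · simpa [← IsScalarTower.algebraMap_apply] using congrArg (algebraMap (𝓞 K) K) hα
    · simpa [← IsScalarTower.algebraMap_apply] using congrArg (algebraMap (𝓞 K) K) hγ.symm
  have hJtop : J = ⊤ := by
    refine top_le_iff.mp (Ideal.isCoprime_iff_sup_eq.mp hcop ▸ sup_le ?_ ?_)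
    · exact Ideal.span_le.mpr <| Set.pair_subset (hJ hda)
        (add_mem (Ideal.mem_span_singleton.mpr ⟨γ, hγ⟩) (hJ hdb))
    · exact J.span_singleton_le_iff_mem.mpr (hJ hdm)
  exact IsUnit.of_map (algebraMap (𝓞 F) (𝓞 K)) d (Ideal.span_singleton_eq_top.mp hJtop)

theorem isRelPrime_of_coprimeToN [NumberField K] {N : ℕ} {a b c : 𝓞 F} {α : 𝓞 K}
    {I : FractionalIdeal (𝓞 K)⁰ K} (ha : a ≠ 0)
    (hα : α ^ 2 + algebraMap (𝓞 F) (𝓞 K) b * α +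
      algebraMap (𝓞 F) (𝓞 K) a * algebraMap (𝓞 F) (𝓞 K) c = 0)
    (hαF : (α : K) ∉ (algebraMap F K).range) (habc : Ideal.span {a, b, c} = ⊤)
    (hIa : (Ideal.span {algebraMap (𝓞 F) (𝓞 K) a, α} : FractionalIdeal (𝓞 K)⁰ K) =
      FractionalIdeal.spanSingleton (𝓞 K)⁰ (algebraMap (𝓞 F) K a) * I)
    (hI : CoprimeToN K N I) : IsRelPrime a (N : 𝓞 F) := by
  obtain ⟨b₁, b₂, -, h₂, hb⟩ := hI
  set j := algebraMap (𝓞 F) (𝓞 K)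
  have habc' : Ideal.span {j a, j b, j c} = ⊤ := by
    simpa [Ideal.map_span, Set.image_insert_eq, Ideal.map_top] using congrArg (Ideal.map j) habc
  have h𝔞 : Ideal.span {j a, α} ≠ 0 := by
    simpa [Ideal.zero_eq_bot, Ideal.span_eq_bot] using fun _ h => hαF ⟨0, by simp [h]⟩
  have hb₂ : b₂ = Ideal.span {j a, α + j b} * b₁ := by
    refine mul_left_cancel₀ h𝔞 (FractionalIdeal.coeIdeal_injective (K := K) ?_)
    rw [← mul_assoc, Ideal.span_pair_mul_span_pair_add_eq_span_singleton hα habc']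
    simp only [FractionalIdeal.coeIdeal_mul, FractionalIdeal.coeIdeal_span_singleton]
    rw [hIa, mul_assoc, hb]
    rfl
  refine isRelPrime_of_isCoprime_span_pair ha hα hαF ?_
  rw [map_natCast]
  exact h₂.of_isCoprime_of_dvd_left (hb₂ ▸ dvd_mul_right _ _)

end RingOfIntegers

theorem stmt7_general (F K : Type) [Field F] [Field K] [NumberField F] [NumberField K]
    [Algebra F K] (τ : F →+* ℝ) (σ : K →+* ℂ)
    (hcompat : ∀ x : F, σ (algebraMap F K x) = (τ x : ℂ))
    (hclass : NumberField.classNumber F = 1)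
    (dK : 𝓞 F)
    (N : ℕ)
    (a b c : 𝓞 F) (hQ : IsFormN F τ 1 dK a b c)
    (ω : K) (hω : IsFormRoot F K σ a b c ω)
    (I : FractionalIdeal (nonZeroDivisors (𝓞 K)) K)
    (hI : ∀ x : K, x ∈ (I : Submodule (𝓞 K) K) ↔
      ∃ u v : 𝓞 F, x = iota F K u * ω + iota F K v) :
    CoprimeToN K N I ↔ (∀ d : 𝓞 F, d ∣ a → d ∣ (N : 𝓞 F) → IsUnit d) := by
  have : IsPrincipalIdealRing (𝓞 F) := classNumber_eq_one_iff.mp hclass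
  obtain ⟨hprim, hpos, -, -⟩ := hQ
  obtain ⟨hroot, him⟩ := hω
  change algebraMap (𝓞 F) K a * ω ^ 2 + algebraMap (𝓞 F) K b * ω + algebraMap (𝓞 F) K c = 0
    at hroot
  have ha : a ≠ 0 := by rintro rfl; simp at hpos
  obtain ⟨α, hαK⟩ : ∃ α : 𝓞 K, (α : K) = algebraMap (𝓞 F) K a * ω :=
    ⟨_, IsIntegralClosure.algebraMap_mk' _ _
      (isIntegral_algebraMap_mul_of_quadratic (R := 𝓞 F) hroot)⟩
  have hα : α ^ 2 + algebraMap (𝓞 F) (𝓞 K) b * α +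
      algebraMap (𝓞 F) (𝓞 K) a * algebraMap (𝓞 F) (𝓞 K) c = 0 := by
    apply FaithfulSMul.algebraMap_injective (𝓞 K) K
    simp only [map_add, map_mul, map_pow, map_zero, ← IsScalarTower.algebraMap_apply]
    rw [show algebraMap (𝓞 K) K α = _ from hαK]
    linear_combination algebraMap (𝓞 F) K a * hroot
  have hαF : (α : K) ∉ (algebraMap F K).range := by
    rintro ⟨f, hf⟩
    have := congrArg (fun x => (σ x).im) hf
    simp [hαK, IsScalarTower.algebraMap_apply (𝓞 F) F K, hcompat] at this
    exact this.elim ha him.ne'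
  have habc : Ideal.span {a, b, c} = ⊤ :=
    Ideal.span_eq_top_of_forall_dvd_isUnit (by simpa using hprim)
  have hIa := FractionalIdeal.coeIdeal_span_pair_eq_spanSingleton_mul hI hαK
  exact ⟨isRelPrime_of_coprimeToN ha hα hαF habc hIa, coprimeToN_of_isRelPrime hIa⟩

theorem stmt7 (F K : Type) [Field F] [Field K] [NumberField F] [NumberField K]
    [Algebra F K] (τ : F →+* ℝ) (σ : K →+* ℂ)
    (hcompat : ∀ x : F, σ (algebraMap F K x) = (τ x : ℂ))
    (hF_totallyReal : ∀ φ : F →+* ℂ, ∀ x : F, (φ x).im = 0)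
    (hquadratic : Module.finrank F K = 2)
    (hclass : NumberField.classNumber F = 1)
    (ωK : K) (hωKint : IsIntegral ℤ ωK) (hωKim : 0 < (σ ωK).im)
    (hgen : ∀ x : 𝓞 K, ∃ u v : 𝓞 F, (x : K) = iota F K u * ωK + iota F K v)
    (bK cK : 𝓞 F) (hmin : ωK ^ 2 + iota F K bK * ωK + iota F K cK = 0)
    (dK : 𝓞 F) (hdK : dK = bK ^ 2 - 4 * cK)
    (N : ℕ) (hN : 0 < N)
    (a b c : 𝓞 F) (hQ : IsFormN F τ 1 dK a b c)
    (ω : K) (hω : IsFormRoot F K σ a b c ω)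
    (I : FractionalIdeal (nonZeroDivisors (𝓞 K)) K)
    (hI : ∀ x : K, x ∈ (I : Submodule (𝓞 K) K) ↔
      ∃ u v : 𝓞 F, x = iota F K u * ω + iota F K v) :
    CoprimeToN K N I ↔ (∀ d : 𝓞 F, d ∣ a → d ∣ (N : 𝓞 F) → IsUnit d) :=
  stmt7_general F K τ σ hcompat hclass dK N a b c hQ ω hω I hI
end
end

section
/- Let E be a number field with ring of integers O_E and 𝔪 a nonzero proper ideal of O_E. Then the reduction map SL₂(O_E) → SL₂(O_E/𝔪) is surjective. -/
/-!
The quotient `𝓞 E ⧸ 𝔪` is finite, hence semilocal, and the reduction map is surjective onto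
`SL₂` of any semilocal ring. Over a semilocal ring `S`, `SL₂(S)` is generated by the elementary
transvections, and these lift along any surjection `R → S`. Generation rests on `S` having stable
rank one: for a unimodular row `(a, c)` some `a + t c` is a unit (choose `t` by the Chinese
remainder theorem over the finitely many maximal ideals). A transvection then makes the top-left
entry a unit, a second one clears the bottom-left entry, and the remaining upper triangular
matrix is a product of transvections by Whitehead's identity.
-/

open Function NumberField
open scoped MatrixGroups

theorem IsCoprime.exists_isUnit_add_mul {S : Type*} [CommRing S] [Finite (MaximalSpectrum S)]
    {a c : S} (h : IsCoprime a c) : ∃ t : S, IsUnit (a + t * c) := by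
  classical
  have hcop : Pairwise (IsCoprime on MaximalSpectrum.asIdeal (R := S)) := fun P Q hPQ ↦
    Ideal.isCoprime_iff_sup_eq.mpr <|
      P.isMaximal.coprime_of_ne Q.isMaximal (MaximalSpectrum.ext_iff.not.mp hPQ)
  -- `t ≡ 1` at the maximal ideals containing `a` and `t ≡ 0` at the others
  obtain ⟨t, ht⟩ := Ideal.exists_forall_sub_mem_ideal hcop
    fun P ↦ if a ∈ P.asIdeal then 1 else 0
  refine ⟨t, not_not.mp fun hu ↦ ?_⟩
  obtain ⟨P, hP, hat⟩ := exists_max_ideal_of_mem_nonunits hu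
  have htP := ht ⟨P, hP⟩
  obtain ⟨u, v, huv⟩ := h
  by_cases ha : a ∈ P
  · rw [if_pos ha] at htP
    have hc : c ∈ P := by
      have := P.sub_mem (P.sub_mem hat ha) (P.mul_mem_right c htP)
      rwa [show a + t * c - a - (t - 1) * c = c by ring] at this
    refine hP.ne_top (P.eq_top_iff_one.mpr ?_)
    rw [← huv]
    exact P.add_mem (P.mul_mem_left u ha) (P.mul_mem_left v hc)
  · rw [if_neg ha, sub_zero] at htP
    refine ha ?_
    simpa using P.sub_mem hat (P.mul_mem_right c htP)

namespace Matrix.SpecialLinearGroup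

variable {R S : Type*} [CommRing R] [CommRing S]

def upperTransvection (x : R) : SL(2, R) :=
  ⟨!![1, x; 0, 1], by simp [det_fin_two_of]⟩

def lowerTransvection (x : R) : SL(2, R) :=
  ⟨!![1, 0; x, 1], by simp [det_fin_two_of]⟩

@[simp]
lemma coe_upperTransvection (x : R) :
    (upperTransvection x : Matrix (Fin 2) (Fin 2) R) = !![1, x; 0, 1] :=
  rfl

@[simp]
lemma coe_lowerTransvection (x : R) :
    (lowerTransvection x : Matrix (Fin 2) (Fin 2) R) = !![1, 0; x, 1] :=
  rfl

lemma map_upperTransvection (f : R →+* S) (x : R) :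
    map f (upperTransvection x) = upperTransvection (f x) := by
  ext i j
  fin_cases i <;> fin_cases j <;> simp

lemma map_lowerTransvection (f : R →+* S) (x : R) :
    map f (lowerTransvection x) = lowerTransvection (f x) := by
  ext i j
  fin_cases i <;> fin_cases j <;> simp

variable (R) in
def elementary : Subgroup SL(2, R) :=
  Subgroup.closure (Set.range upperTransvection ∪ Set.range lowerTransvection)

lemma upperTransvection_mem_elementary (x : R) : upperTransvection x ∈ elementary R :=
  Subgroup.subset_closure (.inl ⟨x, rfl⟩)

lemma lowerTransvection_mem_elementary (x : R) : lowerTransvection x ∈ elementary R :=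
  Subgroup.subset_closure (.inr ⟨x, rfl⟩)

lemma elementary_le_range_map {f : R →+* S} (hf : Surjective f) :
    elementary S ≤ (map f).range := by
  rw [elementary, Subgroup.closure_le]
  rintro _ (⟨x, rfl⟩ | ⟨x, rfl⟩) <;> obtain ⟨x, rfl⟩ := hf x
  · exact ⟨_, map_upperTransvection f x⟩
  · exact ⟨_, map_lowerTransvection f x⟩

lemma mem_elementary_of_apply_one_zero_eq_zero {g : SL(2, R)} (hg0 : g 1 0 = 0) :
    g ∈ elementary R := by
  obtain ⟨u, b, v, huv, hg⟩ : ∃ u b v : R, u * v = 1 ∧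
      (g : Matrix (Fin 2) (Fin 2) R) = !![u, b; 0, v] :=
    ⟨g 0 0, g 0 1, g 1 1,
      by simpa [hg0] using (det_fin_two (g : Matrix (Fin 2) (Fin 2) R)).symm.trans g.det_coe,
      hg0 ▸ eta_fin_two _⟩
  -- `upperTransvection u * lowerTransvection (-v) * upperTransvection u = !![0, u; -v, 0]`, and
  -- the product of this with the same matrix for `u = -1` is `!![u, 0; 0, v]`
  have hfactor : g = upperTransvection u * lowerTransvection (-v) * upperTransvection u *
      (upperTransvection (-1) * lowerTransvection 1 * upperTransvection (-1)) *
      upperTransvection (v * b) := by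
    refine Subtype.ext ?_
    simp only [hg, coe_mul, coe_upperTransvection, coe_lowerTransvection, mul_fin_two,
      EmbeddingLike.apply_eq_iff_eq, vecCons_inj, and_true]
    refine ⟨⟨?_, ?_⟩, ?_, ?_⟩
    · linear_combination u * huv
    · linear_combination (b * (u * v - 1) - 1) * huv
    · linear_combination huv
    · linear_combination v * b * huv
  rw [hfactor]
  apply_rules [mul_mem, upperTransvection_mem_elementary, lowerTransvection_mem_elementary]

lemma elementary_eq_top [Finite (MaximalSpectrum R)] : elementary R = ⊤ := by
  refine eq_top_iff.mpr fun g _ ↦ ?_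
  obtain ⟨a, b, c, d, hdet, hg⟩ : ∃ a b c d : R, a * d - b * c = 1 ∧
      (g : Matrix (Fin 2) (Fin 2) R) = !![a, b; c, d] :=
    ⟨g 0 0, g 0 1, g 1 0, g 1 1, (det_fin_two _).symm.trans g.det_coe, eta_fin_two _⟩
  obtain ⟨t, hunit⟩ := IsCoprime.exists_isUnit_add_mul (a := a) (c := c)
    ⟨d, -b, by linear_combination hdet⟩
  obtain ⟨w, hw⟩ := hunit.exists_right_inv
  -- the top-left entry of `upperTransvection t * g` is the unit `a + t * c`
  set g' := lowerTransvection (-(c * w)) * (upperTransvection t * g)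
  have hg' : g' 1 0 = 0 := by
    simp only [g', coe_mul, coe_upperTransvection, coe_lowerTransvection, hg, mul_fin_two,
      of_apply, cons_val_one, cons_val_zero]
    linear_combination (-c) * hw
  have hg_eq : g = (upperTransvection t)⁻¹ * ((lowerTransvection (-(c * w)))⁻¹ * g') := by
    simp only [g', inv_mul_cancel_left]
  rw [hg_eq]
  exact mul_mem (inv_mem (upperTransvection_mem_elementary t)) <|
    mul_mem (inv_mem (lowerTransvection_mem_elementary _))
      (mem_elementary_of_apply_one_zero_eq_zero hg')

theorem map_surjective [Finite (MaximalSpectrum S)] {f : R →+* S} (hf : Surjective f) :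
    Surjective (map (n := Fin 2) f) :=
  MonoidHom.range_eq_top.mp <| top_le_iff.mp <|
    elementary_eq_top (R := S) ▸ elementary_le_range_map hf

end Matrix.SpecialLinearGroup

theorem stmt11_general (E : Type) [Field E] [NumberField E]
    (m : Ideal (𝓞 E)) (hm : m ≠ ⊥) :
    Function.Surjective
      (Matrix.SpecialLinearGroup.map (n := Fin 2) (Ideal.Quotient.mk m)) := by
  have := Ideal.finiteQuotientOfFreeOfNeBot m hm
  exact Matrix.SpecialLinearGroup.map_surjective Ideal.Quotient.mk_surjective

/-- strong approximation: for a number field `E` and a nonzero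
proper ideal `𝔪` of `O_E`, the reduction `SL₂(O_E) → SL₂(O_E/𝔪)` is
surjective. -/
theorem stmt11 (E : Type) [Field E] [NumberField E]
    (m : Ideal (𝓞 E)) (hm : m ≠ ⊥) (hm' : m ≠ ⊤) :
    Function.Surjective
      (Matrix.SpecialLinearGroup.map (n := Fin 2) (Ideal.Quotient.mk m)) :=
  stmt11_general E m hm
end

section
/- For Q, Q' ∈ Q_F(N, d_K): [Q] = [Q'] in C_F(N, d_K) if and only if −conj(ω_Q) = γ(−conj(ω_{Q'})) for some γ ∈ Γ_{F,1}(N), where conj denotes complex conjugation. -/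
/-!
Write `γ = [[p, q], [r, s]]` and push everything to `ℂ` along `σ`, where all coefficients become
real. When `τ (det γ) > 0`, we have `Q^γ = Q'` iff `ω = γ ω'`. If `Q^γ = Q'`, then `γ ω'` is a root of
`Q` in the upper half-plane, hence equals `ω`. Conversely, if `ω = γ ω'`, then `Q^γ` and `Q'`
share the non-real root `ω'`, so they are proportional; their discriminants agree, so the factor
is `±1`, and comparing leading coefficients (both positive) gives `1`.

Applying `conj`, which fixes `F`, turns `-conj ω = γ (-conj ω')` into `ω = γ̃ ω'`, where `γ̃`
negates the off-diagonal entries of `γ`; and `γ ↦ γ̃` is an involution of `Γ_{F,1}(N)`.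
-/

open NumberField Complex

noncomputable section

def IsGammaN (F : Type) [Field F] [NumberField F] (τ : F →+* ℝ) (N : ℕ)
    (γ : Matrix (Fin 2) (Fin 2) (𝓞 F)) : Prop :=
  IsUnit γ.det ∧ 0 < τ (γ.det : F) ∧
    (N : 𝓞 F) ∣ γ 1 0 ∧ ∃ ζ : (𝓞 F)ˣ, (N : 𝓞 F) ∣ (γ 1 1 - (ζ : 𝓞 F))

def FormAct (F : Type) [Field F] [NumberField F]
    (γ : Matrix (Fin 2) (Fin 2) (𝓞 F)) (a b c a' b' c' : 𝓞 F) : Prop :=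
  γ.det * a' = a * γ 0 0 ^ 2 + b * γ 0 0 * γ 1 0 + c * γ 1 0 ^ 2 ∧
  γ.det * b' = 2 * a * γ 0 0 * γ 0 1 + b * (γ 0 0 * γ 1 1 + γ 0 1 * γ 1 0)
      + 2 * c * γ 1 0 * γ 1 1 ∧
  γ.det * c' = a * γ 0 1 ^ 2 + b * γ 0 1 * γ 1 1 + c * γ 1 1 ^ 2

section Moebius

variable {K L : Type*} [Field K] [Field L]

def IsMoebiusImage (p q r s z w : K) : Prop :=
  r * w + s ≠ 0 ∧ z = (p * w + q) / (r * w + s)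

lemma isMoebiusImage_map_iff (f : K →+* L) {p q r s z w : K} :
    IsMoebiusImage (f p) (f q) (f r) (f s) (f z) (f w) ↔ IsMoebiusImage p q r s z w := by
  simp only [IsMoebiusImage, ← map_mul, ← map_add, ← map_div₀, map_ne_zero, f.injective.eq_iff]

lemma isMoebiusImage_neg_iff {p q r s z w : K} :
    IsMoebiusImage p q r s (-z) (-w) ↔ IsMoebiusImage p (-q) (-r) s z w := by
  have hden : r * -w + s = -r * w + s := by ring
  have hnum : -((p * -w + q) / (-r * w + s)) = (p * w + -q) / (-r * w + s) := by ring
  rw [IsMoebiusImage, IsMoebiusImage, hden, neg_eq_iff_eq_neg, hnum]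

lemma quadratic_moebius_mul_sq {p q r s w : K} (a b c : K) (hden : r * w + s ≠ 0) :
    (a * ((p * w + q) / (r * w + s)) ^ 2 + b * ((p * w + q) / (r * w + s)) + c)
        * (r * w + s) ^ 2
      = (a * p ^ 2 + b * p * r + c * r ^ 2) * w ^ 2
        + (2 * a * p * q + b * (p * s + q * r) + 2 * c * r * s) * w
        + (a * q ^ 2 + b * q * s + c * s ^ 2) := by
  set u := (p * w + q) / (r * w + s)
  have hu : u * (r * w + s) = p * w + q := div_mul_cancel₀ _ hden
  linear_combination (a * (u * (r * w + s) + (p * w + q)) + b * (r * w + s)) * hu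

end Moebius

section FormTransform

variable {R S : Type*} [CommRing R] [CommRing S]

/-- `Q' = Q^γ`, i.e. `(p s - q r) • Q' = Q ∘ γ`, for `Q = [a, b, c]`, `Q' = [a', b', c']` and
`γ = [[p, q], [r, s]]`. -/
def IsFormTransform (p q r s a b c a' b' c' : R) : Prop :=
  (p * s - q * r) * a' = a * p ^ 2 + b * p * r + c * r ^ 2 ∧
  (p * s - q * r) * b' = 2 * a * p * q + b * (p * s + q * r) + 2 * c * r * s ∧
  (p * s - q * r) * c' = a * q ^ 2 + b * q * s + c * s ^ 2

lemma isFormTransform_map_iff {f : R →+* S} (hf : Function.Injective f)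
    {p q r s a b c a' b' c' : R} :
    IsFormTransform (f p) (f q) (f r) (f s) (f a) (f b) (f c) (f a') (f b') (f c') ↔
      IsFormTransform p q r s a b c a' b' c' := by
  simp only [IsFormTransform, ← map_ofNat f 2, ← map_mul, ← map_add, ← map_sub, ← map_pow,
    hf.eq_iff]

lemma discrim_transform (p q r s a b c : R) :
    (2 * a * p * q + b * (p * s + q * r) + 2 * c * r * s) ^ 2
        - 4 * (a * p ^ 2 + b * p * r + c * r ^ 2) * (a * q ^ 2 + b * q * s + c * s ^ 2)
      = (p * s - q * r) ^ 2 * (b ^ 2 - 4 * a * c) := by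
  ring

end FormTransform

section RealQuadratic

variable {a b c a' b' c' : ℝ} {z w : ℂ}

lemma quadratic_coeffs_of_root (hz : (a : ℂ) * z ^ 2 + b * z + c = 0) (him : z.im ≠ 0) :
    b = -(2 * a * z.re) ∧ c = a * (z.re ^ 2 + z.im ^ 2) := by
  have hre := congrArg re hz
  have him' := congrArg im hz
  simp only [pow_two, add_re, add_im, mul_re, mul_im, ofReal_re, ofReal_im, zero_re, zero_im,
    zero_mul, sub_zero, add_zero] at hre him'
  have hb : b = -(2 * a * z.re) := by
    have h : z.im * (2 * a * z.re + b) = 0 := by linarith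
    have := (mul_eq_zero.1 h).resolve_left him
    linarith
  subst hb
  exact ⟨rfl, by linarith⟩

lemma discrim_neg_of_root (ha : 0 < a) (hz : (a : ℂ) * z ^ 2 + b * z + c = 0)
    (him : z.im ≠ 0) : b ^ 2 - 4 * a * c < 0 := by
  obtain ⟨rfl, rfl⟩ := quadratic_coeffs_of_root hz him
  have : 0 < a ^ 2 * z.im ^ 2 := by positivity
  nlinarith

lemma quadratic_form_pos_of_root (ha : 0 < a) (hz : (a : ℂ) * z ^ 2 + b * z + c = 0)
    (him : z.im ≠ 0) {x y : ℝ} (hxy : x ≠ 0 ∨ y ≠ 0) :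
    0 < a * x ^ 2 + b * x * y + c * y ^ 2 := by
  obtain ⟨rfl, rfl⟩ := quadratic_coeffs_of_root hz him
  have key : a * x ^ 2 + -(2 * a * z.re) * x * y + a * (z.re ^ 2 + z.im ^ 2) * y ^ 2
      = a * ((x - z.re * y) ^ 2 + (z.im * y) ^ 2) := by ring
  rw [key]
  rcases eq_or_ne y 0 with rfl | hy
  · have hx : x ≠ 0 := hxy.resolve_right (not_not.2 rfl)
    simp only [mul_zero, sub_zero]
    positivity
  · have : 0 < (z.im * y) ^ 2 := by positivity
    positivity

lemma eq_of_quadratic_roots_im_pos {u : ℂ} (ha : a ≠ 0) (hz : (a : ℂ) * z ^ 2 + b * z + c = 0)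
    (hu : (a : ℂ) * u ^ 2 + b * u + c = 0) (hz_im : 0 < z.im) (hu_im : 0 < u.im) : u = z := by
  have h : (u - z) * (a * (u + z) + b) = 0 := by linear_combination hu - hz
  refine sub_eq_zero.1 ((mul_eq_zero.1 h).resolve_right fun h' => ?_)
  have him := congrArg im h'
  simp only [add_im, mul_im, ofReal_re, ofReal_im, zero_mul, add_zero, zero_im] at him
  rcases mul_eq_zero.1 him with h | h
  · exact ha h
  · linarith

lemma proportional_of_common_root (hw : (a : ℂ) * w ^ 2 + b * w + c = 0)
    (hw' : (a' : ℂ) * w ^ 2 + b' * w + c' = 0) (him : w.im ≠ 0) :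
    a' * b = a * b' ∧ a' * c = a * c' := by
  have h : ((a' * b - a * b' : ℝ) : ℂ) * w + ((a' * c - a * c' : ℝ) : ℂ) = 0 := by
    push_cast
    linear_combination (a' : ℂ) * hw - (a : ℂ) * hw'
  have him' := congrArg im h
  have hre := congrArg re h
  simp only [add_im, add_re, mul_im, mul_re, ofReal_re, ofReal_im, zero_mul, add_zero, sub_zero,
    zero_im, zero_re] at him' hre
  have hb : a' * b - a * b' = 0 := (mul_eq_zero.1 him').resolve_right him
  rw [hb, zero_mul, zero_add] at hre
  constructor <;> linarith

lemma im_moebius_pos {p q r s : ℝ} (hdet : 0 < p * s - q * r) (hw : 0 < w.im)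
    (hden : (r : ℂ) * w + s ≠ 0) : 0 < ((p * w + q) / (r * w + s)).im := by
  have hnum : ((p : ℂ) * w + q).im * ((r : ℂ) * w + s).re
      - ((p : ℂ) * w + q).re * ((r : ℂ) * w + s).im = (p * s - q * r) * w.im := by
    simp only [add_re, add_im, mul_re, mul_im, ofReal_re, ofReal_im]
    ring
  rw [div_im, div_sub_div_same, hnum]
  exact div_pos (mul_pos hdet hw) (normSq_pos.mpr hden)

variable {p q r s : ℝ} (hdet : 0 < p * s - q * r) (ha : 0 < a)
  (hz : (a : ℂ) * z ^ 2 + b * z + c = 0) (hz_im : 0 < z.im)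
  (hw : (a' : ℂ) * w ^ 2 + b' * w + c' = 0) (hw_im : 0 < w.im)
include hdet ha hz hz_im hw hw_im

lemma isMoebiusImage_of_isFormTransform (hT : IsFormTransform p q r s a b c a' b' c') :
    IsMoebiusImage (p : ℂ) q r s z w := by
  obtain ⟨h1, h2, h3⟩ := hT
  have hden : (r : ℂ) * w + s ≠ 0 := by
    intro h0
    have hr : r = 0 := by simpa [hw_im.ne'] using congrArg im h0
    have hs : s = 0 := by simpa [hr] using congrArg re h0
    simp [hr, hs] at hdet
  have hu : (a : ℂ) * ((p * w + q) / (r * w + s)) ^ 2 + b * ((p * w + q) / (r * w + s)) + c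
      = 0 := by
    have e1 : ((p : ℂ) * s - q * r) * a' = a * p ^ 2 + b * p * r + c * r ^ 2 := by
      exact_mod_cast h1
    have e2 : ((p : ℂ) * s - q * r) * b' = 2 * a * p * q + b * (p * s + q * r) + 2 * c * r * s := by
      exact_mod_cast h2
    have e3 : ((p : ℂ) * s - q * r) * c' = a * q ^ 2 + b * q * s + c * s ^ 2 := by
      exact_mod_cast h3
    refine (mul_eq_zero.1 ?_).resolve_right (pow_ne_zero 2 hden)
    linear_combination quadratic_moebius_mul_sq (p := (p : ℂ)) (q := q) a b c hden
      - e1 * w ^ 2 - e2 * w - e3 + ((p : ℂ) * s - q * r) * hw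
  exact ⟨hden, (eq_of_quadratic_roots_im_pos ha.ne' hz hu hz_im
    (im_moebius_pos hdet hw_im hden)).symm⟩

lemma isFormTransform_of_isMoebiusImage (ha' : 0 < a')
    (hdisc : b ^ 2 - 4 * a * c = b' ^ 2 - 4 * a' * c') (hM : IsMoebiusImage (p : ℂ) q r s z w) :
    IsFormTransform p q r s a b c a' b' c' := by
  obtain ⟨hden, hzw⟩ := hM
  have hA_pos : 0 < a * p ^ 2 + b * p * r + c * r ^ 2 := by
    refine quadratic_form_pos_of_root ha hz hz_im.ne' ?_
    by_contra! h
    simp [h.1, h.2] at hdet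
  have hdiscT := discrim_transform p q r s a b c
  have hQw : ((a * p ^ 2 + b * p * r + c * r ^ 2 : ℝ) : ℂ) * w ^ 2
      + ((2 * a * p * q + b * (p * s + q * r) + 2 * c * r * s : ℝ) : ℂ) * w
      + ((a * q ^ 2 + b * q * s + c * s ^ 2 : ℝ) : ℂ) = 0 := by
    push_cast
    rw [← quadratic_moebius_mul_sq _ _ _ hden, ← hzw, hz, zero_mul]
  set A := a * p ^ 2 + b * p * r + c * r ^ 2
  set B := 2 * a * p * q + b * (p * s + q * r) + 2 * c * r * s
  set C := a * q ^ 2 + b * q * s + c * s ^ 2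
  obtain ⟨hB, hC⟩ := proportional_of_common_root hQw hw hw_im.ne'
  have hsq : (A - (p * s - q * r) * a') * (A + (p * s - q * r) * a') * (b' ^ 2 - 4 * a' * c')
      = 0 := by
    linear_combination (-(a' * B + A * b')) * hB + 4 * a' * A * hC + a' ^ 2 * hdiscT
      + a' ^ 2 * (p * s - q * r) ^ 2 * hdisc
  have hA : (p * s - q * r) * a' = A := by
    have := mul_pos hdet ha'
    have := discrim_neg_of_root ha' hw hw_im.ne'
    simp only [mul_eq_zero] at hsq
    rcases hsq with (h | h) | h <;> linarith
  refine ⟨hA, mul_left_cancel₀ ha'.ne' ?_, mul_left_cancel₀ ha'.ne' ?_⟩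
  · linear_combination b' * hA - hB
  · linear_combination c' * hA - hC

end RealQuadratic

section NegOffDiag

variable {R : Type*} [CommRing R]

def negOffDiag (γ : Matrix (Fin 2) (Fin 2) R) : Matrix (Fin 2) (Fin 2) R :=
  !![γ 0 0, -γ 0 1; -γ 1 0, γ 1 1]

lemma negOffDiag_involutive : Function.Involutive (negOffDiag (R := R)) := by
  intro γ
  ext i j
  fin_cases i <;> fin_cases j <;> simp [negOffDiag]

lemma det_negOffDiag (γ : Matrix (Fin 2) (Fin 2) R) : (negOffDiag γ).det = γ.det := by
  simp [negOffDiag, Matrix.det_fin_two]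

end NegOffDiag

section RingOfIntegers

variable {F K : Type} [Field F] [Field K] [NumberField F] [Algebra F K]

lemma iota_neg (u : 𝓞 F) : iota F K (-u) = -iota F K u :=
  map_neg ((algebraMap F K).comp (algebraMap (𝓞 F) F)) u

lemma isGammaN_negOffDiag {τ : F →+* ℝ} {N : ℕ} {γ : Matrix (Fin 2) (Fin 2) (𝓞 F)} :
    IsGammaN F τ N (negOffDiag γ) ↔ IsGammaN F τ N γ := by
  rw [IsGammaN, IsGammaN, det_negOffDiag]
  simp [negOffDiag]

lemma formAct_iff_isFormTransform {γ : Matrix (Fin 2) (Fin 2) (𝓞 F)} {a b c a' b' c' : 𝓞 F} :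
    FormAct F γ a b c a' b' c' ↔
      IsFormTransform (γ 0 0) (γ 0 1) (γ 1 0) (γ 1 1) a b c a' b' c' := by
  rw [FormAct, Matrix.det_fin_two]
  rfl

lemma isMoebiusImage_neg_conj_iff (conj : K ≃ₐ[F] K) {p q r s : 𝓞 F} {z w : K} :
    IsMoebiusImage (iota F K p) (iota F K q) (iota F K r) (iota F K s) (-conj z) (-conj w) ↔
      IsMoebiusImage (iota F K p) (iota F K (-q)) (iota F K (-r)) (iota F K s) z w := by
  have hfix : ∀ u : 𝓞 F, conj (iota F K u) = iota F K u := fun u => conj.commutes _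
  calc _ ↔ IsMoebiusImage (conj (iota F K p)) (conj (iota F K q)) (conj (iota F K r))
        (conj (iota F K s)) (conj (-z)) (conj (-w)) := by simp only [hfix, map_neg]
    _ ↔ _ := isMoebiusImage_map_iff (conj : K →+* K)
    _ ↔ _ := by rw [isMoebiusImage_neg_iff, iota_neg, iota_neg]

variable {τ : F →+* ℝ} {σ : K →+* ℂ} (hcompat : ∀ x : F, σ (algebraMap F K x) = (τ x : ℂ))
include hcompat

lemma IsFormRoot.map_eq_zero {a b c : 𝓞 F} {ω : K} (hω : IsFormRoot F K σ a b c ω) :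
    (τ a : ℂ) * σ ω ^ 2 + τ b * σ ω + τ c = 0 := by
  simpa [iota, hcompat] using congrArg σ hω.1

lemma formAct_iff_isMoebiusImage {a b c a' b' c' : 𝓞 F} (ha : 0 < τ a) (ha' : 0 < τ a')
    (hdisc : b ^ 2 - 4 * a * c = b' ^ 2 - 4 * a' * c') {ω ω' : K}
    (hω : IsFormRoot F K σ a b c ω) (hω' : IsFormRoot F K σ a' b' c' ω')
    {γ : Matrix (Fin 2) (Fin 2) (𝓞 F)} (hdet : 0 < τ (γ.det : F)) :
    FormAct F γ a b c a' b' c' ↔ IsMoebiusImage (iota F K (γ 0 0)) (iota F K (γ 0 1))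
      (iota F K (γ 1 0)) (iota F K (γ 1 1)) ω ω' := by
  set ρ : 𝓞 F →+* ℝ := τ.comp (algebraMap (𝓞 F) F)
  have hρ : Function.Injective ρ := τ.injective.comp RingOfIntegers.coe_injective
  have hσι : ∀ u : 𝓞 F, σ (iota F K u) = (ρ u : ℂ) := fun u => hcompat u
  have hdet' : 0 < ρ (γ 0 0) * ρ (γ 1 1) - ρ (γ 0 1) * ρ (γ 1 0) := by
    simpa [ρ, Matrix.det_fin_two] using hdet
  have hdisc' : ρ b ^ 2 - 4 * ρ a * ρ c = ρ b' ^ 2 - 4 * ρ a' * ρ c' := by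
    simpa [map_ofNat ρ 4] using congrArg ρ hdisc
  have hz := hω.map_eq_zero hcompat
  have hw := hω'.map_eq_zero hcompat
  rw [formAct_iff_isFormTransform, ← isFormTransform_map_iff hρ, ← isMoebiusImage_map_iff σ]
  simp only [hσι]
  exact ⟨isMoebiusImage_of_isFormTransform hdet' ha hz hω.2 hw hω'.2,
    isFormTransform_of_isMoebiusImage hdet' ha hz hω.2 hw hω'.2 ha' hdisc'⟩

end RingOfIntegers

theorem stmt12_general (F K : Type) [Field F] [Field K] [NumberField F]
    [Algebra F K] (τ : F →+* ℝ) (σ : K →+* ℂ)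
    (hcompat : ∀ x : F, σ (algebraMap F K x) = (τ x : ℂ))
    -- conj : complex conjugation on K
    (conj : K ≃ₐ[F] K)
    (N : ℕ) (dK : 𝓞 F)
    (a b c : 𝓞 F) (hQ : IsFormN F τ N dK a b c)
    (a' b' c' : 𝓞 F) (hQ' : IsFormN F τ N dK a' b' c')
    (ω : K) (hω : IsFormRoot F K σ a b c ω)
    (ω' : K) (hω' : IsFormRoot F K σ a' b' c' ω') :
    (∃ γ : Matrix (Fin 2) (Fin 2) (𝓞 F),
        IsGammaN F τ N γ ∧ FormAct F γ a b c a' b' c')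
    ↔ (∃ γ : Matrix (Fin 2) (Fin 2) (𝓞 F), IsGammaN F τ N γ ∧
        iota F K (γ 1 0) * (-(conj ω')) + iota F K (γ 1 1) ≠ 0 ∧
        -(conj ω) = (iota F K (γ 0 0) * (-(conj ω')) + iota F K (γ 0 1)) /
          (iota F K (γ 1 0) * (-(conj ω')) + iota F K (γ 1 1))) := by
  calc (∃ γ, IsGammaN F τ N γ ∧ FormAct F γ a b c a' b' c')
      ↔ ∃ γ, IsGammaN F τ N γ ∧ IsMoebiusImage (iota F K (γ 0 0)) (iota F K (γ 0 1))
          (iota F K (γ 1 0)) (iota F K (γ 1 1)) ω ω' :=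
        exists_congr fun γ => and_congr_right fun hγ =>
          formAct_iff_isMoebiusImage hcompat hQ.2.1 hQ'.2.1 (hQ.2.2.1.trans hQ'.2.2.1.symm)
            hω hω' hγ.2.1
    _ ↔ ∃ γ, IsGammaN F τ N (negOffDiag γ) ∧ IsMoebiusImage (iota F K (negOffDiag γ 0 0))
          (iota F K (negOffDiag γ 0 1)) (iota F K (negOffDiag γ 1 0))
          (iota F K (negOffDiag γ 1 1)) ω ω' :=
        negOffDiag_involutive.surjective.exists
    _ ↔ _ :=
        exists_congr fun γ =>
          and_congr isGammaN_negOffDiag (isMoebiusImage_neg_conj_iff conj).symm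

theorem stmt12 (F K : Type) [Field F] [Field K] [NumberField F] [NumberField K]
    [Algebra F K] (τ : F →+* ℝ) (σ : K →+* ℂ)
    (hcompat : ∀ x : F, σ (algebraMap F K x) = (τ x : ℂ))
    (hF_totallyReal : ∀ φ : F →+* ℂ, ∀ x : F, (φ x).im = 0)
    (hquadratic : Module.finrank F K = 2)
    (hclass : NumberField.classNumber F = 1)
    -- conj : complex conjugation on K
    (conj : K ≃ₐ[F] K)
    (hσconj : ∀ x : K, σ (conj x) = starRingEnd ℂ (σ x))
    (N : ℕ) (hN : 0 < N) (dK : 𝓞 F)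
    (a b c : 𝓞 F) (hQ : IsFormN F τ N dK a b c)
    (a' b' c' : 𝓞 F) (hQ' : IsFormN F τ N dK a' b' c')
    (ω : K) (hω : IsFormRoot F K σ a b c ω)
    (ω' : K) (hω' : IsFormRoot F K σ a' b' c' ω') :
    (∃ γ : Matrix (Fin 2) (Fin 2) (𝓞 F),
        IsGammaN F τ N γ ∧ FormAct F γ a b c a' b' c')
    ↔ (∃ γ : Matrix (Fin 2) (Fin 2) (𝓞 F), IsGammaN F τ N γ ∧
        iota F K (γ 1 0) * (-(conj ω')) + iota F K (γ 1 1) ≠ 0 ∧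
        -(conj ω) = (iota F K (γ 0 0) * (-(conj ω')) + iota F K (γ 0 1)) /
          (iota F K (γ 1 0) * (-(conj ω')) + iota F K (γ 1 1))) :=
  stmt12_general F K τ σ hcompat conj N dK a b c hQ a' b' c' hQ' ω hω ω' hω'
end
end

section
/- If the narrow class number of F is one, then every class in C_F(N, d_K) contains a representative Q ∈ Q_F⁺(N, d_K), i.e., a form whose leading coefficient is totally positive. -/
open NumberField Complex

noncomputable section

/-- Total positivity of an element of `O_F` (at all real embeddings of the
totally real field `F`). -/
def TotPos (F : Type) [Field F] [NumberField F] (x : 𝓞 F) : Prop :=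
  ∀ τ' : F →+* ℝ, 0 < τ' (x : F)

/-! Write `a = ε x` with `x` a totally positive generator of the ideal `(a)` and `ε` a unit.
Since `a` and `x` are both positive at `τ`, so is `ε`, hence `diag(1, ε)` lies in `Γ_{F,1}(N)`;
it sends `[a, b, c]` to `[x, b, ε c]`, which is again a form of level `N` and discriminant `d_K`,
now with totally positive leading coefficient. -/

theorem map_pos_of_mul_eq {F : Type} [Field F] {τ : F →+* ℝ} {ε x a : 𝓞 F} (h : ε * x = a)
    (hx : 0 < τ (x : F)) (ha : 0 < τ (a : F)) : 0 < τ (ε : F) := by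
  have hmul : τ (ε : F) * τ (x : F) = τ (a : F) := by
    rw [← map_mul, ← h]
    push_cast
    rfl
  exact pos_of_mul_pos_left (hmul ▸ ha) hx.le

section

variable {F : Type} [Field F] [NumberField F]

theorem exists_totPos_mul_unit_eq
    (hnarrow : ∀ I : Ideal (𝓞 F), I ≠ ⊥ → ∃ x : 𝓞 F, TotPos F x ∧ I = Ideal.span {x})
    {a : 𝓞 F} (ha : a ≠ 0) : ∃ x : 𝓞 F, ∃ ε : (𝓞 F)ˣ, TotPos F x ∧ (ε : 𝓞 F) * x = a := by
  obtain ⟨x, hx, hspan⟩ := hnarrow (Ideal.span {a}) (by simpa [Ideal.span_singleton_eq_bot])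
  obtain ⟨u, hu⟩ := Ideal.span_singleton_eq_span_singleton.mp hspan
  exact ⟨x, u⁻¹, hx, by rw [← hu, mul_comm, Units.mul_inv_cancel_right]⟩

theorem isGammaN_diagonal_unit (τ : F →+* ℝ) (N : ℕ) (ε : (𝓞 F)ˣ) (hε : 0 < τ (ε : F)) :
    IsGammaN F τ N !![1, 0; 0, (ε : 𝓞 F)] := by
  refine ⟨?_, ?_, ?_, ε, ?_⟩ <;> simp [Matrix.det_fin_two_of, hε]

theorem formAct_diagonal_unit (ε x b c : 𝓞 F) :
    FormAct F !![1, 0; 0, ε] (ε * x) b c x b (c * ε) := by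
  refine ⟨?_, ?_, ?_⟩ <;> simp only [Matrix.det_fin_two_of, Matrix.of_apply,
    Matrix.cons_val', Matrix.cons_val_zero, Matrix.cons_val_one, Matrix.empty_val',
    Matrix.cons_val_fin_one] <;> ring

theorem isFormN_of_mul_unit {τ : F →+* ℝ} {N : ℕ} {dK x b c : 𝓞 F} (ε : (𝓞 F)ˣ)
    (hQ : IsFormN F τ N dK (ε * x) b c) (hx : 0 < τ (x : F)) :
    IsFormN F τ N dK x b (c * ε) := by
  obtain ⟨hprim, -, hdisc, hcop⟩ := hQ
  refine ⟨fun d hdx hdb hdc => ?_, hx, ?_, fun d hdx hdN => hcop d (hdx.mul_left _) hdN⟩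
  · exact hprim d (hdx.mul_left _) hdb ((Units.dvd_mul_right).mp hdc)
  · rw [← hdisc]; ring

end

theorem stmt14_general (F : Type) [Field F] [NumberField F] (τ : F →+* ℝ)
    -- narrow class number of F is one
    (hnarrow : ∀ I : Ideal (𝓞 F), I ≠ ⊥ →
      ∃ x : 𝓞 F, TotPos F x ∧ I = Ideal.span {x})
    (N : ℕ) (dK : 𝓞 F)
    (a b c : 𝓞 F) (hQ : IsFormN F τ N dK a b c) :
    ∃ a' b' c' : 𝓞 F, IsFormN F τ N dK a' b' c' ∧ TotPos F a' ∧
      ∃ γ : Matrix (Fin 2) (Fin 2) (𝓞 F),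
        IsGammaN F τ N γ ∧ FormAct F γ a b c a' b' c' := by
  have ha : a ≠ 0 := by
    rintro rfl
    simpa using hQ.2.1
  obtain ⟨x, ε, hx, rfl⟩ := exists_totPos_mul_unit_eq hnarrow ha
  have hε : 0 < τ (ε : F) := map_pos_of_mul_eq rfl (hx τ) hQ.2.1
  exact ⟨x, b, c * ε, isFormN_of_mul_unit ε hQ (hx τ), hx, _,
    isGammaN_diagonal_unit τ N ε hε, formAct_diagonal_unit _ x b c⟩

theorem stmt14 (F K : Type) [Field F] [Field K] [NumberField F] [NumberField K]
    [Algebra F K] (τ : F →+* ℝ) (σ : K →+* ℂ)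
    (hcompat : ∀ x : F, σ (algebraMap F K x) = (τ x : ℂ))
    (hF_totallyReal : ∀ φ : F →+* ℂ, ∀ x : F, (φ x).im = 0)
    (hquadratic : Module.finrank F K = 2)
    -- narrow class number of F is one
    (hnarrow : ∀ I : Ideal (𝓞 F), I ≠ ⊥ →
      ∃ x : 𝓞 F, TotPos F x ∧ I = Ideal.span {x})
    (N : ℕ) (hN : 0 < N) (dK : 𝓞 F)
    (a b c : 𝓞 F) (hQ : IsFormN F τ N dK a b c) :
    ∃ a' b' c' : 𝓞 F, IsFormN F τ N dK a' b' c' ∧ TotPos F a' ∧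
      ∃ γ : Matrix (Fin 2) (Fin 2) (𝓞 F),
        IsGammaN F τ N γ ∧ FormAct F γ a b c a' b' c' :=
  stmt14_general F τ hnarrow N dK a b c hQ
end
end

section
/- Let C ∈ C(N·O_K) and let 𝔠 be an integral ideal in C. Then there exist ξ₁, ξ₂ ∈ K such that 𝔠⁻¹ = O_F·ξ₁ + O_F·ξ₂ and φ_i(ξ₁/ξ₂) lies in the upper half-plane ℍ for every i = 1, …, g. -/
open NumberField Complex

noncomputable section

/-! Narrow class number one makes `O_F` a PID, so the lattice `𝔠⁻¹` is a free `O_F`-module of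
rank `[K : F] = 2`, say `O_F w₀ + O_F w₁`. Writing `w₀ / w₁ = b + a ω_K` with `a ∈ Fˣ`, the
imaginary part of `φ_i (w₀ / w₁)` is `φ_i(a) · Im φ_i(ω_K)`, so its sign is that of `a` at the
real place below `φ_i`. Narrow class number one also gives a unit `t` with `t a` totally positive,
and then `ξ₁ = t w₀`, `ξ₂ = w₁` work. -/

open Submodule

theorem isPrincipalIdealRing_of_forall_ne_bot {R : Type*} [CommRing R]
    (h : ∀ I : Ideal R, I ≠ ⊥ → ∃ x, I = Ideal.span {x}) : IsPrincipalIdealRing R where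
  principal I := by
    by_cases hI : I = ⊥
    · exact hI ▸ bot_isPrincipal
    · obtain ⟨x, rfl⟩ := h I hI
      exact ⟨x, rfl⟩

theorem FractionalIdeal.isLattice_restrictScalars (F K : Type*) [Field F] [Field K]
    [NumberField F] [NumberField K] [Algebra F K]
    {I : FractionalIdeal (nonZeroDivisors (𝓞 K)) K} (hI : I ≠ 0) :
    IsLattice F ((I : Submodule (𝓞 K) K).restrictScalars (𝓞 F)) where
  fg := (FractionalIdeal.fg_of_isNoetherianRing le_rfl I).restrictScalars
  span_eq_top := by
    obtain ⟨m, hmI, hm⟩ := (I : Submodule (𝓞 K) K).ne_bot_iff.mp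
      (by rwa [Ne, FractionalIdeal.coeToSubmodule_eq_bot])
    refine eq_top_iff.mpr fun x _ => ?_
    obtain ⟨n, hn, hint⟩ := exists_integral_multiples ℤ ℚ {x / m}
    have hnx : (n : F) • x = (⟨_, hint _ (Finset.mem_singleton_self _)⟩ : 𝓞 K) • m := by
      simp only [Algebra.smul_def, map_intCast, algebraMap_int_eq, eq_intCast,
        Subalgebra.algebraMap_apply]
      field_simp
    have hn' : (n : F) ≠ 0 := by exact_mod_cast hn
    rw [← inv_smul_smul₀ hn' x, hnx]
    exact smul_mem _ _ (subset_span (smul_mem _ _ hmI))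

theorem Submodule.IsLattice.exists_eq_span_pair {R F V : Type*} [CommRing R] [IsDomain R]
    [IsPrincipalIdealRing R] [Field F] [Algebra R F] [IsFractionRing R F] [AddCommGroup V]
    [Module F V] [Module R V] [IsScalarTower R F V] (hV : Module.finrank F V = 2)
    (M : Submodule R V) [IsLattice F M] :
    ∃ w₀ w₁ : V, LinearIndependent F ![w₀, w₁] ∧ M = span R {w₀, w₁} := by
  let b := Module.Free.chooseBasis R M
  have hcard : Fintype.card (Module.Free.ChooseBasisIndex R M) = 2 := by
    rw [← hV, Module.finrank_eq_card_basis (b.extendOfIsLattice F)]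
  let b₂ := b.reindex (Fintype.equivFinOfCardEq hcard)
  refine ⟨b₂ 0, b₂ 1, ?_, ?_⟩
  · convert (b₂.extendOfIsLattice F).linearIndependent using 1
    ext i
    fin_cases i <;> simp
  · have := congrArg (map M.subtype) b₂.span_eq
    rw [map_span, map_subtype_top, ← Set.range_comp] at this
    simp only [Fin.range_fin_succ, Set.range_eq_empty, insert_empty_eq] at this
    exact this.symm

theorem exists_eq_algebraMap_add_mul_of_linearIndependent {F K : Type*} [Field F] [Field K]
    [Algebra F K] (hK : Module.finrank F K = 2) {ω : K} (hω : ω ∉ Set.range (algebraMap F K))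
    {w₀ w₁ : K} (hw : LinearIndependent F ![w₀, w₁]) :
    ∃ a b : F, a ≠ 0 ∧ w₀ = (algebraMap F K b + algebraMap F K a * ω) * w₁ := by
  have h1ω : LinearIndependent F ![1, ω] := by
    refine LinearIndependent.pair_iff.mpr fun s t hst => ?_
    by_cases ht : t = 0
    · subst ht
      simpa using hst
    · refine absurd ⟨-s / t, ?_⟩ hω
      rw [Algebra.smul_def, Algebra.smul_def, mul_one] at hst
      have htK : algebraMap F K t ≠ 0 := (map_ne_zero _).mpr ht
      rw [map_div₀, map_neg, div_eq_iff htK]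
      linear_combination -hst
  have : FiniteDimensional F K := Module.finite_of_finrank_eq_succ hK
  have hspan : span F {1, ω} = ⊤ := by
    rw [← Matrix.range_cons_cons_empty 1 ω ![]]
    exact h1ω.span_eq_top_of_card_eq_finrank' (by simp [hK])
  have hw₁ : w₁ ≠ 0 := by simpa using hw.ne_zero 1
  obtain ⟨b, a, hab⟩ := mem_span_pair.mp (hspan ▸ mem_top : w₀ / w₁ ∈ span F {1, ω})
  rw [Algebra.smul_def, Algebra.smul_def, mul_one, eq_div_iff hw₁] at hab
  refine ⟨a, b, fun ha => ?_, hab.symm⟩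
  subst ha
  have := LinearIndependent.pair_iff.mp hw 1 (-b) (by simp [Algebra.smul_def, ← hab])
  simp at this

theorem im_map_algebraMap_add_mul_pos {F K : Type*} [Field F] [Field K] [Algebra F K]
    (φ : K →+* ℂ) (hreal : ∀ x : F, (φ (algebraMap F K x)).im = 0) {a : F}
    (ha : ∀ τ : F →+* ℝ, 0 < τ a) (b : F) {ω : K} (hω : 0 < (φ ω).im) :
    0 < (φ (algebraMap F K b + algebraMap F K a * ω)).im := by
  have hψ : ComplexEmbedding.IsReal (φ.comp (algebraMap F K)) :=
    ComplexEmbedding.isReal_iff.mpr (RingHom.ext fun x => conj_eq_iff_im.mpr (hreal x))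
  have hφa : φ (algebraMap F K a) = hψ.embedding a := (hψ.coe_embedding_apply a).symm
  rw [map_add, map_mul, add_im, mul_im, hreal, hφa, ofReal_re, ofReal_im]
  simpa using mul_pos (ha _) hω

theorem exists_unit_mul_totallyPositive (F : Type) [Field F] [NumberField F]
    (hnarrow : ∀ I : Ideal (𝓞 F), I ≠ ⊥ → ∃ x : 𝓞 F, TotPos F x ∧ I = Ideal.span {x})
    {a : F} (ha : a ≠ 0) :
    ∃ t : (𝓞 F)ˣ, ∀ τ : F →+* ℝ, 0 < τ (t * a) := by
  obtain ⟨p, q, hq, rfl⟩ := IsFractionRing.div_surjective (A := 𝓞 F) a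
  have hq0 : (q : F) ≠ 0 := by exact_mod_cast nonZeroDivisors.ne_zero hq
  have hp0 : p ≠ 0 := by rintro rfl; simp at ha
  obtain ⟨x, hx, hspan⟩ := hnarrow (Ideal.span {p * q})
    (by simpa [Ideal.span_singleton_eq_bot] using mul_ne_zero hp0 (nonZeroDivisors.ne_zero hq))
  obtain ⟨t, ht⟩ := Ideal.span_singleton_eq_span_singleton.mp hspan
  refine ⟨t, fun τ => ?_⟩
  have htx : ((t : 𝓞 F) : F) * (p / q) = x / q ^ 2 := by
    rw [← ht]
    push_cast
    field_simp
  rw [htx, map_div₀, map_pow]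
  exact div_pos (hx τ) (pow_two_pos_of_ne_zero ((map_ne_zero τ).mpr hq0))

theorem iota_mul_eq_smul (F K : Type) [Field F] [Field K] [NumberField F] [Algebra F K]
    (u : 𝓞 F) (x : K) : iota F K u * x = u • x := by
  rw [Algebra.smul_def, IsScalarTower.algebraMap_apply (𝓞 F) F K]
  rfl

theorem stmt15_general (F K : Type) [Field F] [Field K] [NumberField F] [NumberField K]
    [Algebra F K] (σ : K →+* ℂ)
    (hF_totallyReal : ∀ φ : F →+* ℂ, ∀ x : F, (φ x).im = 0)
    (hquadratic : Module.finrank F K = 2)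
    -- narrow class number of F is one
    (hnarrow : ∀ I : Ideal (𝓞 F), I ≠ ⊥ →
      ∃ x : 𝓞 F, TotPos F x ∧ I = Ideal.span {x})
    (ωK : K) (hωKim : 0 < (σ ωK).im)
    -- the fixed CM-type
    (g : ℕ) (φs : Fin g → (K →+* ℂ))
    (hωKtype : ∀ i, 0 < (φs i ωK).im)
    -- 𝔠 : an integral ideal relatively prime to N·O_K
    (c : Ideal (𝓞 K)) (hc : c ≠ ⊥) :
    ∃ ξ₁ ξ₂ : K, ξ₂ ≠ 0 ∧
      (∀ x : K,
        x ∈ (((c : FractionalIdeal (nonZeroDivisors (𝓞 K)) K))⁻¹ :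
            FractionalIdeal (nonZeroDivisors (𝓞 K)) K).coeToSubmodule ↔
          ∃ u v : 𝓞 F, x = iota F K u * ξ₁ + iota F K v * ξ₂) ∧
      ∀ i, 0 < (φs i (ξ₁ / ξ₂)).im := by
  have := isPrincipalIdealRing_of_forall_ne_bot fun I hI => (hnarrow I hI).imp fun _ h => h.2
  set I : FractionalIdeal (nonZeroDivisors (𝓞 K)) K := (c : FractionalIdeal _ K)⁻¹
  have := FractionalIdeal.isLattice_restrictScalars F K
    (inv_ne_zero (FractionalIdeal.coeIdeal_ne_zero.mpr hc) : I ≠ 0)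
  obtain ⟨w₀, w₁, hw, hspan⟩ :=
    IsLattice.exists_eq_span_pair hquadratic ((I : Submodule (𝓞 K) K).restrictScalars (𝓞 F))
  have hωK : ωK ∉ Set.range (algebraMap F K) := by
    rintro ⟨x, rfl⟩
    exact hωKim.ne' (hF_totallyReal (σ.comp (algebraMap F K)) x)
  obtain ⟨a, b, ha, hw₀⟩ := exists_eq_algebraMap_add_mul_of_linearIndependent hquadratic hωK hw
  obtain ⟨t, ht⟩ := exists_unit_mul_totallyPositive F hnarrow ha
  have hw₁ : w₁ ≠ 0 := by simpa using hw.ne_zero 1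
  have hspan' : span (𝓞 F) {(t : 𝓞 F) • w₀, w₁} = span (𝓞 F) {w₀, w₁} := by
    rw [span_insert, span_singleton_smul_eq t.isUnit, ← span_insert]
  refine ⟨(t : 𝓞 F) • w₀, w₁, hw₁, fun x => ?_, fun i => ?_⟩
  · rw [← restrictScalars_mem (𝓞 F), hspan, ← hspan', mem_span_pair]
    simp only [iota_mul_eq_smul, eq_comm]
  · have hratio : (t : 𝓞 F) • w₀ / w₁
        = algebraMap F K (t * b) + algebraMap F K (t * a) * ωK := by
      rw [← iota_mul_eq_smul, hw₀, iota, map_mul, map_mul]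
      field_simp
    rw [hratio]
    exact im_map_algebraMap_add_mul_pos (φs i) (hF_totallyReal ((φs i).comp _)) ht _ (hωKtype i)

theorem stmt15 (F K : Type) [Field F] [Field K] [NumberField F] [NumberField K]
    [Algebra F K] (τ : F →+* ℝ) (σ : K →+* ℂ)
    (hcompat : ∀ x : F, σ (algebraMap F K x) = (τ x : ℂ))
    (hF_totallyReal : ∀ φ : F →+* ℂ, ∀ x : F, (φ x).im = 0)
    (hquadratic : Module.finrank F K = 2)
    -- narrow class number of F is one
    (hnarrow : ∀ I : Ideal (𝓞 F), I ≠ ⊥ →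
      ∃ x : 𝓞 F, TotPos F x ∧ I = Ideal.span {x})
    (ωK : K) (hωKint : IsIntegral ℤ ωK) (hωKim : 0 < (σ ωK).im)
    (hgen : ∀ x : 𝓞 K, ∃ u v : 𝓞 F, (x : K) = iota F K u * ωK + iota F K v)
    -- the fixed CM-type
    (g : ℕ) (hg : 0 < g) (φs : Fin g → (K →+* ℂ))
    (hcover : ∀ ψ : K →+* ℂ, ∃ i, ψ = φs i ∨ ψ = (starRingEnd ℂ).comp (φs i))
    (hdist : ∀ i j, φs i ≠ (starRingEnd ℂ).comp (φs j))
    (hφ0 : φs ⟨0, hg⟩ = σ)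
    (hωKtype : ∀ i, 0 < (φs i ωK).im)
    (N : ℕ) (hN : 0 < N)
    -- 𝔠 : an integral ideal relatively prime to N·O_K
    (c : Ideal (𝓞 K)) (hc : c ≠ ⊥)
    (hcop : IsCoprime c (Ideal.span {(N : 𝓞 K)})) :
    ∃ ξ₁ ξ₂ : K, ξ₂ ≠ 0 ∧
      (∀ x : K,
        x ∈ (((c : FractionalIdeal (nonZeroDivisors (𝓞 K)) K))⁻¹ :
            FractionalIdeal (nonZeroDivisors (𝓞 K)) K).coeToSubmodule ↔
          ∃ u v : 𝓞 F, x = iota F K u * ξ₁ + iota F K v * ξ₂) ∧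
      ∀ i, 0 < (φs i (ξ₁ / ξ₂)).im :=
  stmt15_general F K σ hF_totallyReal hquadratic hnarrow ωK hωKim g φs hωKtype c hc
end
end

section
/- With 𝔠, ξ₁, ξ₂ as above and A ∈ M₂(O_F) the matrix satisfying (ω_K, 1)ᵀ = A·(ξ₁, ξ₂)ᵀ: the determinant of A is totally positive, det(A)·O_F = N_{K/F}(𝔠), and gcd(det(A), N) = 1. -/
open NumberField Complex

noncomputable section

/-!
Let `M(x)` be the matrix of multiplication by `x ∈ O_K` in the `O_F`-basis `(ω_K, 1)`, so that
`N_{K/F}(x) = det M(x)`. For `x ∈ 𝔠` the coordinates of `x ξ₁, x ξ₂` form an integral matrix `B`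
with `M(x) = A B`, so `det A ∣ N(x)`. Dually, `adj A · (ω_K, 1)ᵀ = det A · (ξ₁, ξ₂)ᵀ` shows that
`det A · 𝔠⁻¹` is an integral ideal `J`, with `𝔠 J = (det A)` and `det A ∣ N(y)` for `y ∈ J`.
So `N(𝔠)` and `N(J)` are both contained in `(det A)` while `N(𝔠) N(J) = (det A)²`, which forces
`N(𝔠) = (det A)`.

At a real place `τ` of `F`, pick a CM embedding `φ` above it. With `z = φ(ξ₁/ξ₂)` we get
`φ(ω_K) = (a z + b)/(c z + d)` for `τ A = [[a, b], [c, d]]`, and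
`Im φ(ω_K) · |c z + d|² = τ(det A) · Im z` makes `τ(det A)` positive.

Finally `𝔠 + N O_K = O_K` gives `x ∈ 𝔠` with `x ≡ 1 mod N`, hence `N(x) ≡ 1 mod N`;
a common divisor of `det A` and `N` then divides `1`.
-/

open Matrix
open scoped nonZeroDivisors

theorem Algebra.dvd_norm_one_add_algebraMap_mul_sub_one {R S : Type*} [CommRing R] [CommRing S]
    [Algebra R S] [Module.Free R S] [Module.Finite R S] (n : R) (t : S) :
    n ∣ Algebra.norm R (1 + algebraMap R S n * t) - 1 := by
  classical
  let b := Module.Free.chooseBasis R S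
  rw [← Ideal.mem_span_singleton, ← Ideal.Quotient.eq_zero_iff_mem, map_sub, map_one, sub_eq_zero,
    Algebra.norm_eq_matrix_det b, RingHom.map_det]
  suffices h : (Ideal.Quotient.mk (Ideal.span {n})).mapMatrix
      (Algebra.leftMulMatrix b (1 + algebraMap R S n * t)) = 1 by
    rw [h, det_one]
  ext i j
  simp [Algebra.leftMulMatrix_eq_repr_mul, ← Algebra.smul_def, one_apply]

theorem Ideal.exists_mem_dvd_norm_sub_one_of_isCoprime {R S : Type*} [CommRing R] [CommRing S]
    [Algebra R S] [Module.Free R S] [Module.Finite R S] {I : Ideal S} {n : R}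
    (h : IsCoprime I (Ideal.span {algebraMap R S n})) :
    ∃ x ∈ I, n ∣ Algebra.norm R x - 1 := by
  obtain ⟨x, hx, y, hy, hxy⟩ := Ideal.isCoprime_iff_exists.mp h
  obtain ⟨t, rfl⟩ := Ideal.mem_span_singleton'.mp hy
  refine ⟨x, hx, ?_⟩
  convert Algebra.dvd_norm_one_add_algebraMap_mul_sub_one n (-t) using 3
  linear_combination hxy

theorem Ideal.relNorm_le_span_singleton {R S : Type*} [CommRing R] [CommRing S] [Algebra R S]
    [IsDedekindDomain R] [IsDedekindDomain S] [Module.Finite R S] [Module.IsTorsionFree R S]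
    [Module.Free R S] {I : Ideal S} {a : R} (h : ∀ x ∈ I, a ∣ Algebra.norm R x) :
    Ideal.relNorm R I ≤ Ideal.span {a} := by
  rw [Ideal.relNorm_apply, Ideal.span_le, Algebra.intNorm_eq_norm]
  rintro _ ⟨x, hx, rfl⟩
  exact Ideal.mem_span_singleton.mpr (h x hx)

theorem Ideal.eq_of_le_of_le_of_mul_eq_sq {R : Type*} [CommRing R] [IsDedekindDomain R]
    {I J P : Ideal R} (hI : I ≤ P) (hJ : J ≤ P) (h : I * J = P ^ 2) : I = P := by
  rcases eq_or_ne P ⊥ with rfl | hP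
  · exact le_bot_iff.mp hI
  obtain ⟨I', rfl⟩ := Ideal.dvd_iff_le.mpr hI
  obtain ⟨J', rfl⟩ := Ideal.dvd_iff_le.mpr hJ
  have hIJ : I' * J' = 1 := by
    refine mul_left_cancel₀ (pow_ne_zero 2 hP) ?_
    rw [mul_one]
    convert h using 1
    ring
  rw [Ideal.isUnit_iff.mp (IsUnit.of_mul_eq_one _ hIJ), Ideal.mul_top]

theorem Matrix.exists_mapMatrix_mulVec_eq {R S : Type*} [CommRing R] [CommRing S] (f : R →+* S)
    {b w : Fin 2 → S} (h : ∀ i, ∃ u v : R, w i = f u * b 0 + f v * b 1) :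
    ∃ M : Matrix (Fin 2) (Fin 2) R, w = f.mapMatrix M *ᵥ b := by
  choose u v huv using h
  refine ⟨Matrix.of fun i => ![u i, v i], funext fun i => ?_⟩
  simp [huv, mulVec, dotProduct, Fin.sum_univ_two]

theorem Matrix.det_smul_eq_adjugate_mulVec {n S : Type*} [Fintype n] [DecidableEq n] [CommRing S]
    (A : Matrix n n S) (w : n → S) : A.det • w = A.adjugate *ᵥ (A *ᵥ w) := by
  rw [mulVec_mulVec, adjugate_mul, smul_mulVec, one_mulVec]

theorem Complex.det_mul_im_eq_im_mul_normSq {a b c d : ℝ} {z w : ℂ}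
    (h : w * (c * z + d) = a * z + b) :
    (a * d - b * c) * z.im = w.im * normSq (c * z + d) := by
  have key := congrArg (fun u => (u * (starRingEnd ℂ) (c * z + d)).im) h
  simp only [mul_assoc, mul_conj] at key
  simp only [ofReal_im, mul_im, ofReal_re, map_add, map_mul, conj_ofReal, add_im, add_re,
    mul_re, conj_re, conj_im] at key
  linear_combination -key

theorem Complex.mul_sub_mul_pos_of_mul_eq {a b c d : ℝ} {z w : ℂ}
    (h : w * (c * z + d) = a * z + b) (hz : 0 < z.im) (hw : 0 < w.im) (hcd : c * z + d ≠ 0) :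
    0 < a * d - b * c := by
  have := Complex.det_mul_im_eq_im_mul_normSq h
  have := mul_pos hw (normSq_pos.mpr hcd)
  nlinarith

theorem NumberField.ComplexEmbedding.exists_comp_algebraMap_eq_ofReal {F K : Type*}
    [Field F] [Field K] [Algebra F K] [Algebra.IsAlgebraic F K] {ι : Type*} (φs : ι → K →+* ℂ)
    (hcover : ∀ ψ : K →+* ℂ, ∃ i, ψ = φs i ∨ ψ = (starRingEnd ℂ).comp (φs i)) (τ : F →+* ℝ) :
    ∃ i, ∀ x : F, φs i (algebraMap F K x) = τ x := by
  obtain ⟨i, hi | hi⟩ := hcover (lift K (ofRealHom.comp τ))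
  · exact ⟨i, fun x => by rw [← hi, lift_algebraMap_apply]; rfl⟩
  · refine ⟨i, fun x => ?_⟩
    have := congrArg (starRingEnd ℂ) (lift_algebraMap_apply K (ofRealHom.comp τ) x)
    rwa [hi, RingHom.comp_apply, conj_conj, RingHom.comp_apply, ofRealHom_eq_coe, conj_ofReal]
      at this

theorem linearIndependent_pair_one_of_notMem_range {F K : Type*} [Field F] [Field K]
    [Algebra F K] {ω : K} (hω : ω ∉ Set.range (algebraMap F K)) : LinearIndependent F ![ω, 1] := by
  rw [LinearIndependent.pair_iff]
  intro s t hst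
  rcases eq_or_ne s 0 with rfl | hs
  · simpa using hst
  · refine absurd ⟨-t / s, ?_⟩ hω
    rw [Algebra.smul_def, Algebra.smul_def, mul_one] at hst
    rw [map_div₀, map_neg, div_eq_iff (by simpa using hs)]
    linear_combination -hst

theorem map_det_pos_of_im_pos {F K : Type*} [Field F] [Field K] [Algebra F K] {ψ : K →+* ℂ}
    {τ : F →+* ℝ} (hψ : ∀ x, ψ (algebraMap F K x) = τ x) {ω ξ₁ ξ₂ : K} (hξ₂ : ξ₂ ≠ 0)
    (hω : 0 < (ψ ω).im) (hξ : 0 < (ψ (ξ₁ / ξ₂)).im) {A : Matrix (Fin 2) (Fin 2) F}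
    (hA : ![ω, 1] = (algebraMap F K).mapMatrix A *ᵥ ![ξ₁, ξ₂]) :
    0 < τ A.det := by
  set z := ψ (ξ₁ / ξ₂) with hz
  have hξ₁ : ψ ξ₁ = z * ψ ξ₂ := by
    rw [hz, map_div₀, div_mul_cancel₀ _ ((map_ne_zero ψ).mpr hξ₂)]
  have hA₀ := congrArg ψ (congrFun hA 0)
  have hA₁ := congrArg ψ (congrFun hA 1)
  simp only [mulVec, dotProduct, Fin.sum_univ_two, RingHom.mapMatrix_apply, map_apply,
    cons_val_zero, cons_val_one, map_add, map_mul, map_one, hψ, hξ₁] at hA₀ hA₁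
  have hden : ψ ξ₂ * (τ (A 1 0) * z + τ (A 1 1)) = 1 := by linear_combination -hA₁
  rw [det_fin_two, map_sub, map_mul, map_mul]
  refine Complex.mul_sub_mul_pos_of_mul_eq ?_ hξ hω (right_ne_zero_of_mul_eq_one hden)
  linear_combination (τ (A 1 0) * z + τ (A 1 1)) * hA₀ + (τ (A 0 0) * z + τ (A 0 1)) * hden

namespace NumberField.RingOfIntegers

theorem isIntegral_algebraMap {F K : Type*} [Field F] [Field K] [Algebra F K] (u : 𝓞 F) :
    IsIntegral ℤ (algebraMap (𝓞 F) K u) :=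
  u.isIntegral_coe.algebraMap

theorem mem_one_of_isIntegral {K : Type*} [Field K] {x : K} (hx : IsIntegral ℤ x) :
    x ∈ (1 : FractionalIdeal (𝓞 K)⁰ K) :=
  (FractionalIdeal.mem_one_iff _).mpr ⟨⟨x, hx⟩, rfl⟩

theorem spanSingleton_det_mul_inv_le_one {F K : Type} [Field F] [Field K] [NumberField K]
    [Algebra F K] {ω : 𝓞 K} {c : Ideal (𝓞 K)} {ξ₁ ξ₂ : K}
    (hcinv : ∀ y : K, y ∈ (c : FractionalIdeal (𝓞 K)⁰ K)⁻¹ ↔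
      ∃ u v : 𝓞 F, y = algebraMap (𝓞 F) K u * ξ₁ + algebraMap (𝓞 F) K v * ξ₂)
    {A : Matrix (Fin 2) (Fin 2) (𝓞 F)}
    (hA : ![(ω : K), 1] = (algebraMap (𝓞 F) K).mapMatrix A *ᵥ ![ξ₁, ξ₂]) :
    FractionalIdeal.spanSingleton _ (algebraMap (𝓞 F) K A.det) *
      (c : FractionalIdeal (𝓞 K)⁰ K)⁻¹ ≤ 1 := by
  have hadj : ∀ i, IsIntegral ℤ (algebraMap (𝓞 F) K A.det * ![ξ₁, ξ₂] i) := by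
    intro i
    have h :=
      congrFun (det_smul_eq_adjugate_mulVec ((algebraMap (𝓞 F) K).mapMatrix A) ![ξ₁, ξ₂]) i
    rw [← hA, ← RingHom.map_det, ← RingHom.map_adjugate, Pi.smul_apply, smul_eq_mul] at h
    simp only [h, mulVec, dotProduct, Fin.sum_univ_two, RingHom.mapMatrix_apply, map_apply,
      cons_val_zero, cons_val_one, mul_one]
    exact ((isIntegral_algebraMap _).mul ω.isIntegral_coe).add (isIntegral_algebraMap _)
  intro y hy
  obtain ⟨η, hη, rfl⟩ := FractionalIdeal.mem_singleton_mul.mp hy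
  obtain ⟨u, v, rfl⟩ := (hcinv η).mp hη
  refine mem_one_of_isIntegral ?_
  rw [mul_add, mul_left_comm, mul_left_comm _ (algebraMap (𝓞 F) K v)]
  exact ((isIntegral_algebraMap u).mul (hadj 0)).add ((isIntegral_algebraMap v).mul (hadj 1))

variable {F K : Type} [Field F] [Field K] [Algebra F K] [Algebra (𝓞 F) (𝓞 K)]
  [IsScalarTower (𝓞 F) (𝓞 K) K]

theorem linearIndependent_pair_one_of_notMem_range (ω : 𝓞 K)
    (hω : (ω : K) ∉ Set.range (algebraMap F K)) : LinearIndependent (𝓞 F) ![ω, (1 : 𝓞 K)] := by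
  have hF := (LinearIndependent.pair_iff (R := F) (x := (ω : K)) (y := 1)).mp
    (_root_.linearIndependent_pair_one_of_notMem_range hω)
  refine LinearIndependent.pair_iff.mpr fun s t hst => ?_
  have hst' : algebraMap (𝓞 F) K s * ω + algebraMap (𝓞 F) K t = 0 := by
    have := congrArg ((↑) : 𝓞 K → K) hst
    push_cast at this
    simpa [Algebra.smul_def] using this
  have := hF s t (by rwa [Algebra.smul_def, Algebra.smul_def, mul_one])
  exact ⟨coe_eq_zero_iff.mp this.1, coe_eq_zero_iff.mp this.2⟩

noncomputable def basisPairOne (ω : 𝓞 K) (hω : (ω : K) ∉ Set.range (algebraMap F K))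
    (hgen : ∀ x : 𝓞 K, ∃ u v : 𝓞 F, (x : K) = algebraMap (𝓞 F) K u * ω + algebraMap (𝓞 F) K v) :
    Module.Basis (Fin 2) (𝓞 F) (𝓞 K) :=
  .mk (linearIndependent_pair_one_of_notMem_range ω hω) fun x _ => by
    obtain ⟨u, v, huv⟩ := hgen x
    have hx : x = u • ω + v • 1 := by
      ext
      push_cast
      simpa [Algebra.smul_def] using huv
    rw [hx]
    exact Submodule.add_mem _ (Submodule.smul_mem _ _ (Submodule.subset_span ⟨0, rfl⟩))
      (Submodule.smul_mem _ _ (Submodule.subset_span ⟨1, rfl⟩))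

theorem norm_eq_det_of_smul_eq_mulVec {ω : 𝓞 K} (hω : (ω : K) ∉ Set.range (algebraMap F K))
    (hgen : ∀ x : 𝓞 K, ∃ u v : 𝓞 F, (x : K) = algebraMap (𝓞 F) K u * ω + algebraMap (𝓞 F) K v)
    {x : 𝓞 K} {P : Matrix (Fin 2) (Fin 2) (𝓞 F)}
    (h : (x : K) • ![(ω : K), 1] = (algebraMap (𝓞 F) K).mapMatrix P *ᵥ ![(ω : K), 1]) :
    Algebra.norm (𝓞 F) x = P.det := by
  set b := basisPairOne ω hω hgen
  have hmul : ∀ j, x * b j = ∑ k, P j k • b k := by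
    intro j
    ext
    have hj := congrFun h j
    push_cast [Fin.sum_univ_two]
    fin_cases j <;> simpa [b, basisPairOne, mulVec, dotProduct, Fin.sum_univ_two, Algebra.smul_def]
      using hj
  rw [Algebra.norm_eq_matrix_det b, ← det_transpose]
  congr 1
  refine Matrix.ext fun i j => ?_
  rw [transpose_apply, Algebra.leftMulMatrix_eq_repr_mul, hmul, b.repr_sum_self]

theorem det_dvd_norm_of_mem [NumberField K] {ω : 𝓞 K} (hω : (ω : K) ∉ Set.range (algebraMap F K))
    (hgen : ∀ x : 𝓞 K, ∃ u v : 𝓞 F, (x : K) = algebraMap (𝓞 F) K u * ω + algebraMap (𝓞 F) K v)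
    {c : Ideal (𝓞 K)} (hc : c ≠ ⊥) {ξ₁ ξ₂ : K}
    (hcinv : ∀ y : K, y ∈ (c : FractionalIdeal (𝓞 K)⁰ K)⁻¹ ↔
      ∃ u v : 𝓞 F, y = algebraMap (𝓞 F) K u * ξ₁ + algebraMap (𝓞 F) K v * ξ₂)
    {A : Matrix (Fin 2) (Fin 2) (𝓞 F)}
    (hA : ![(ω : K), 1] = (algebraMap (𝓞 F) K).mapMatrix A *ᵥ ![ξ₁, ξ₂])
    {x : 𝓞 K} (hx : x ∈ c) : A.det ∣ Algebra.norm (𝓞 F) x := by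
  have hint : ∀ y ∈ (c : FractionalIdeal (𝓞 K)⁰ K)⁻¹,
      ∃ u v : 𝓞 F, (x : K) * y = algebraMap (𝓞 F) K u * ω + algebraMap (𝓞 F) K v * 1 := by
    intro y hy
    have hxy := FractionalIdeal.mul_mem_mul (FractionalIdeal.mem_coeIdeal_of_mem _ hx) hy
    rw [mul_inv_cancel₀ (FractionalIdeal.coeIdeal_ne_zero.mpr hc)] at hxy
    obtain ⟨t, ht⟩ := (FractionalIdeal.mem_one_iff _).mp hxy
    simpa [← ht] using hgen t
  obtain ⟨M, hM⟩ := exists_mapMatrix_mulVec_eq (algebraMap (𝓞 F) K)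
    (w := (x : K) • ![ξ₁, ξ₂]) (b := ![(ω : K), 1]) fun i => by
      fin_cases i
      · exact hint ξ₁ ((hcinv ξ₁).mpr ⟨1, 0, by simp⟩)
      · exact hint ξ₂ ((hcinv ξ₂).mpr ⟨0, 1, by simp⟩)
  refine ⟨M.det, (norm_eq_det_of_smul_eq_mulVec hω hgen ?_).trans (det_mul A M)⟩
  calc (x : K) • ![(ω : K), 1]
      = (algebraMap (𝓞 F) K).mapMatrix A *ᵥ ((x : K) • ![ξ₁, ξ₂]) := by
        rw [mulVec_smul, ← hA]
    _ = (algebraMap (𝓞 F) K).mapMatrix (A * M) *ᵥ ![(ω : K), 1] := by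
        rw [hM, mulVec_mulVec, map_mul]

theorem det_dvd_norm_of_mem_spanSingleton_mul_inv [NumberField K] {ω : 𝓞 K}
    (hω : (ω : K) ∉ Set.range (algebraMap F K))
    (hgen : ∀ x : 𝓞 K, ∃ u v : 𝓞 F, (x : K) = algebraMap (𝓞 F) K u * ω + algebraMap (𝓞 F) K v)
    {c : Ideal (𝓞 K)} {ξ₁ ξ₂ : K}
    (hcinv : ∀ y : K, y ∈ (c : FractionalIdeal (𝓞 K)⁰ K)⁻¹ ↔
      ∃ u v : 𝓞 F, y = algebraMap (𝓞 F) K u * ξ₁ + algebraMap (𝓞 F) K v * ξ₂)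
    {A : Matrix (Fin 2) (Fin 2) (𝓞 F)}
    (hA : ![(ω : K), 1] = (algebraMap (𝓞 F) K).mapMatrix A *ᵥ ![ξ₁, ξ₂])
    {y : 𝓞 K} (hy : (y : K) ∈ FractionalIdeal.spanSingleton _ (algebraMap (𝓞 F) K A.det) *
      (c : FractionalIdeal (𝓞 K)⁰ K)⁻¹) : A.det ∣ Algebra.norm (𝓞 F) y := by
  obtain ⟨η, hη, hyη⟩ := FractionalIdeal.mem_singleton_mul.mp hy
  obtain ⟨M, hM⟩ := exists_mapMatrix_mulVec_eq (algebraMap (𝓞 F) K)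
    (w := η • ![(ω : K), 1]) (b := ![ξ₁, ξ₂]) fun i => by
      fin_cases i
      · have hωη := FractionalIdeal.mul_mem_mul (FractionalIdeal.coe_mem_one _ ω) hη
        rw [one_mul] at hωη
        simpa [mul_comm η] using (hcinv _).mp hωη
      · simpa using (hcinv η).mp hη
  refine ⟨M.det, (norm_eq_det_of_smul_eq_mulVec hω hgen (P := M * A.adjugate) ?_).trans ?_⟩
  · calc (y : K) • ![(ω : K), 1]
        = algebraMap (𝓞 F) K A.det • (η • ![(ω : K), 1]) := by rw [hyη, smul_smul]
      _ = (algebraMap (𝓞 F) K).mapMatrix M *ᵥ (algebraMap (𝓞 F) K A.det • ![ξ₁, ξ₂]) := by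
        rw [hM, mulVec_smul]
      _ = (algebraMap (𝓞 F) K).mapMatrix (M * A.adjugate) *ᵥ ![(ω : K), 1] := by
        rw [RingHom.map_det, det_smul_eq_adjugate_mulVec, ← hA, ← RingHom.map_adjugate,
          mulVec_mulVec, map_mul]
  · rw [det_mul, det_adjugate, Fintype.card_fin, pow_one, mul_comm]

theorem relNorm_eq_span_det [NumberField F] [NumberField K]
    [Module.Finite (𝓞 F) (𝓞 K)] [Module.Free (𝓞 F) (𝓞 K)]
    {ω : 𝓞 K} (hω : (ω : K) ∉ Set.range (algebraMap F K))
    (hgen : ∀ x : 𝓞 K, ∃ u v : 𝓞 F, (x : K) = algebraMap (𝓞 F) K u * ω + algebraMap (𝓞 F) K v)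
    {c : Ideal (𝓞 K)} (hc : c ≠ ⊥) {ξ₁ ξ₂ : K}
    (hcinv : ∀ y : K, y ∈ (c : FractionalIdeal (𝓞 K)⁰ K)⁻¹ ↔
      ∃ u v : 𝓞 F, y = algebraMap (𝓞 F) K u * ξ₁ + algebraMap (𝓞 F) K v * ξ₂)
    {A : Matrix (Fin 2) (Fin 2) (𝓞 F)}
    (hA : ![(ω : K), 1] = (algebraMap (𝓞 F) K).mapMatrix A *ᵥ ![ξ₁, ξ₂]) :
    Ideal.relNorm (𝓞 F) c = Ideal.span {A.det} := by
  obtain ⟨J, hJ⟩ :=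
    FractionalIdeal.le_one_iff_exists_coeIdeal.mp (spanSingleton_det_mul_inv_le_one hcinv hA)
  have hcJ : c * J = Ideal.span {algebraMap (𝓞 F) (𝓞 K) A.det} := by
    apply FractionalIdeal.coeIdeal_injective (K := K)
    dsimp only
    rw [FractionalIdeal.coeIdeal_mul, hJ, FractionalIdeal.coeIdeal_span_singleton,
      ← IsScalarTower.algebraMap_apply, mul_left_comm,
      mul_inv_cancel₀ (FractionalIdeal.coeIdeal_ne_zero.mpr hc), mul_one]
  refine Ideal.eq_of_le_of_le_of_mul_eq_sq
    (Ideal.relNorm_le_span_singleton fun x hx => det_dvd_norm_of_mem hω hgen hc hcinv hA hx)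
    (Ideal.relNorm_le_span_singleton (I := J) fun y hy =>
      det_dvd_norm_of_mem_spanSingleton_mul_inv hω hgen hcinv hA
        (hJ ▸ FractionalIdeal.mem_coeIdeal_of_mem _ hy)) ?_
  rw [← map_mul, hcJ, Ideal.relNorm_singleton, Algebra.intNorm_eq_norm,
    Algebra.norm_algebraMap_of_basis (basisPairOne ω hω hgen), Fintype.card_fin,
    Ideal.span_singleton_pow]

end NumberField.RingOfIntegers

theorem stmt16_general (F K : Type) [Field F] [Field K] [NumberField F] [NumberField K]
    [Algebra F K] (σ : K →+* ℂ)
    [Algebra (𝓞 F) (𝓞 K)] [Module.Finite (𝓞 F) (𝓞 K)] [Module.Free (𝓞 F) (𝓞 K)]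
    (halg : ∀ u : 𝓞 F, ((algebraMap (𝓞 F) (𝓞 K) u : 𝓞 K) : K) = iota F K u)
    (hF_totallyReal : ∀ φ : F →+* ℂ, ∀ x : F, (φ x).im = 0)
    (ωK : K) (hωKint : IsIntegral ℤ ωK) (hωKim : 0 < (σ ωK).im)
    (hgen : ∀ x : 𝓞 K, ∃ u v : 𝓞 F, (x : K) = iota F K u * ωK + iota F K v)
    (g : ℕ) (φs : Fin g → (K →+* ℂ))
    (hcover : ∀ ψ : K →+* ℂ, ∃ i, ψ = φs i ∨ ψ = (starRingEnd ℂ).comp (φs i))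
    (hωKtype : ∀ i, 0 < (φs i ωK).im)
    (N : ℕ)
    (c : Ideal (𝓞 K)) (hc : c ≠ ⊥)
    (hcop : IsCoprime c (Ideal.span {(N : 𝓞 K)}))
    (ξ₁ ξ₂ : K) (hξ₂ : ξ₂ ≠ 0)
    (hcinv : ∀ x : K,
      x ∈ (((c : FractionalIdeal (nonZeroDivisors (𝓞 K)) K))⁻¹ :
          FractionalIdeal (nonZeroDivisors (𝓞 K)) K).coeToSubmodule ↔
        ∃ u v : 𝓞 F, x = iota F K u * ξ₁ + iota F K v * ξ₂)
    (hξH : ∀ i, 0 < (φs i (ξ₁ / ξ₂)).im)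
    -- A : matrix over O_F with (ω_K, 1)ᵀ = A (ξ₁, ξ₂)ᵀ
    (A : Matrix (Fin 2) (Fin 2) (𝓞 F))
    (hA1 : ωK = iota F K (A 0 0) * ξ₁ + iota F K (A 0 1) * ξ₂)
    (hA2 : (1 : K) = iota F K (A 1 0) * ξ₁ + iota F K (A 1 1) * ξ₂) :
    TotPos F A.det ∧
    Ideal.span {A.det} = Ideal.relNorm (𝓞 F) c ∧
    (∀ d : 𝓞 F, d ∣ A.det → d ∣ (N : 𝓞 F) → IsUnit d) := by
  have : IsScalarTower (𝓞 F) (𝓞 K) K := .of_algebraMap_eq fun u => (halg u).symm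
  let ω : 𝓞 K := ⟨ωK, hωKint⟩
  have hω : (ω : K) ∉ Set.range (algebraMap F K) := by
    rintro ⟨x, hx⟩
    have hreal := hF_totallyReal (σ.comp (algebraMap F K)) x
    rw [RingHom.comp_apply, hx] at hreal
    exact hωKim.ne' hreal
  have hA : ![(ω : K), 1] = (algebraMap (𝓞 F) K).mapMatrix A *ᵥ ![ξ₁, ξ₂] := by
    ext i
    fin_cases i <;> simp only [mulVec, dotProduct, Fin.sum_univ_two, RingHom.mapMatrix_apply,
      map_apply, cons_val_zero, cons_val_one]
    exacts [hA1, hA2]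
  have hnorm := RingOfIntegers.relNorm_eq_span_det hω hgen hc hcinv hA
  refine ⟨fun τ' => ?_, hnorm.symm, fun d hdA hdN => ?_⟩
  · obtain ⟨i, hi⟩ := ComplexEmbedding.exists_comp_algebraMap_eq_ofReal φs hcover τ'
    have hpos := map_det_pos_of_im_pos hi hξ₂ (hωKtype i) (hξH i)
      (A := (algebraMap (𝓞 F) F).mapMatrix A) hA
    rwa [← RingHom.map_det] at hpos
  · obtain ⟨x, hx, hNx⟩ :=
      Ideal.exists_mem_dvd_norm_sub_one_of_isCoprime (I := c) (n := (N : 𝓞 F))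
        (by rwa [map_natCast])
    have hAx := RingOfIntegers.det_dvd_norm_of_mem hω hgen hc hcinv hA hx
    exact isUnit_of_dvd_one (by simpa using dvd_sub (hdA.trans hAx) (hdN.trans hNx))

theorem stmt16 (F K : Type) [Field F] [Field K] [NumberField F] [NumberField K]
    [Algebra F K] (τ : F →+* ℝ) (σ : K →+* ℂ)
    [Algebra (𝓞 F) (𝓞 K)] [Module.Finite (𝓞 F) (𝓞 K)] [Module.Free (𝓞 F) (𝓞 K)]
    (halg : ∀ u : 𝓞 F, ((algebraMap (𝓞 F) (𝓞 K) u : 𝓞 K) : K) = iota F K u)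
    (hcompat : ∀ x : F, σ (algebraMap F K x) = (τ x : ℂ))
    (hF_totallyReal : ∀ φ : F →+* ℂ, ∀ x : F, (φ x).im = 0)
    (hquadratic : Module.finrank F K = 2)
    (hnarrow : ∀ I : Ideal (𝓞 F), I ≠ ⊥ →
      ∃ x : 𝓞 F, TotPos F x ∧ I = Ideal.span {x})
    (ωK : K) (hωKint : IsIntegral ℤ ωK) (hωKim : 0 < (σ ωK).im)
    (hgen : ∀ x : 𝓞 K, ∃ u v : 𝓞 F, (x : K) = iota F K u * ωK + iota F K v)
    (g : ℕ) (hg : 0 < g) (φs : Fin g → (K →+* ℂ))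
    (hcover : ∀ ψ : K →+* ℂ, ∃ i, ψ = φs i ∨ ψ = (starRingEnd ℂ).comp (φs i))
    (hdist : ∀ i j, φs i ≠ (starRingEnd ℂ).comp (φs j))
    (hφ0 : φs ⟨0, hg⟩ = σ)
    (hωKtype : ∀ i, 0 < (φs i ωK).im)
    (N : ℕ) (hN : 0 < N)
    (c : Ideal (𝓞 K)) (hc : c ≠ ⊥)
    (hcop : IsCoprime c (Ideal.span {(N : 𝓞 K)}))
    (ξ₁ ξ₂ : K) (hξ₂ : ξ₂ ≠ 0)
    (hcinv : ∀ x : K,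
      x ∈ (((c : FractionalIdeal (nonZeroDivisors (𝓞 K)) K))⁻¹ :
          FractionalIdeal (nonZeroDivisors (𝓞 K)) K).coeToSubmodule ↔
        ∃ u v : 𝓞 F, x = iota F K u * ξ₁ + iota F K v * ξ₂)
    (hξH : ∀ i, 0 < (φs i (ξ₁ / ξ₂)).im)
    -- A : matrix over O_F with (ω_K, 1)ᵀ = A (ξ₁, ξ₂)ᵀ
    (A : Matrix (Fin 2) (Fin 2) (𝓞 F))
    (hA1 : ωK = iota F K (A 0 0) * ξ₁ + iota F K (A 0 1) * ξ₂)
    (hA2 : (1 : K) = iota F K (A 1 0) * ξ₁ + iota F K (A 1 1) * ξ₂) :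
    TotPos F A.det ∧
    Ideal.span {A.det} = Ideal.relNorm (𝓞 F) c ∧
    (∀ d : 𝓞 F, d ∣ A.det → d ∣ (N : 𝓞 F) → IsUnit d) :=
  stmt16_general F K σ halg hF_totallyReal ωK hωKint hωKim hgen g φs hcover hωKtype N c hc hcop ξ₁
    ξ₂ hξ₂ hcinv hξH A hA1 hA2
end
end

section
/- Let (K*, {ψ_j}_{j=1}^n) be the reflex of the CM-type (K, {φ_i}), and g: (K*)^× → K^× the reflex norm d ↦ ∏_j ψ_j(d). If d ∈ (K*)^× satisfies d ≡* 1 (mod N·O_{K*}), then g(d) ≡* 1 (mod N·O_K). -/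
/-! Each embedding `ψ_j` maps `𝓞 K*` into the algebraic integers of `ℂ` and preserves congruences
modulo `N`, hence so does the product `∏ j, ψ_j`. Since `σ (g x) = ∏ j, ψ_j x` and `σ` reflects
integrality, `g` maps `𝓞 K*` into `𝓞 K` and preserves congruences modulo `N` there; as `g` is
multiplicative, writing `d = α / β` with `α ≡ β` and `β` prime to `N` gives `g d = g α / g β` of
the same shape. -/

open NumberField Complex

noncomputable section

/-- Multiplicative congruence `ν ≡* 1 (mod N·O_K)`. -/
def MulCongOne (K : Type) [Field K] [NumberField K] (N : ℕ) (ν : K) : Prop :=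
  ∃ α β : 𝓞 K, (β : K) ≠ 0 ∧
    IsCoprime (Ideal.span {β}) (Ideal.span {(N : 𝓞 K)}) ∧
    ν = (α : K) / (β : K) ∧ (N : 𝓞 K) ∣ (α - β)

theorem dvd_prod_sub_prod {R ι : Type*} [CommRing R] (s : Finset ι) {f g : ι → R} {c : R}
    (h : ∀ i ∈ s, c ∣ f i - g i) : c ∣ (∏ i ∈ s, f i) - ∏ i ∈ s, g i := by
  simp_rw [← Ideal.mem_span_singleton, ← SModEq.sub_mem] at h ⊢
  exact SModEq.prod h

theorem MulCongOne.map {K L : Type} [Field K] [NumberField K] [Field L] [NumberField L] {N : ℕ}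
    (F : L →* K) (hint : ∀ u : 𝓞 L, IsIntegral ℤ (F u)) (hzero : ∀ x, x ≠ 0 → F x ≠ 0)
    (hdvd : ∀ u w : 𝓞 L, (N : 𝓞 L) ∣ u - w → ∃ t : 𝓞 K, F u - F w = N * t)
    {d : L} (hd : MulCongOne L N d) : MulCongOne K N (F d) := by
  have lift (u : 𝓞 L) : ∃ v : 𝓞 K, (v : K) = F u := ⟨⟨_, hint u⟩, rfl⟩
  obtain ⟨α, β, hβ, hcop, rfl, hαβ⟩ := hd
  obtain ⟨a, ha⟩ := lift α
  obtain ⟨b, hb⟩ := lift β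
  refine ⟨a, b, hb ▸ hzero _ hβ, ?_, ?_, ?_⟩
  · obtain ⟨u, v, huv⟩ := (Ideal.isCoprime_span_singleton_iff _ _).mp hcop
    obtain ⟨c, hc⟩ := lift u
    obtain ⟨t, ht⟩ := hdvd (u * β) 1 ⟨-v, by linear_combination huv⟩
    refine (Ideal.isCoprime_span_singleton_iff _ _).mpr ⟨c, -t, RingOfIntegers.ext ?_⟩
    push_cast at ht ⊢
    rw [map_mul, map_one] at ht
    linear_combination ht + (b : K) * hc + F u * hb
  · rw [ha, hb]
    exact eq_div_of_mul_eq (hzero _ hβ) (by rw [← map_mul, div_mul_cancel₀ _ hβ])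
  · obtain ⟨t, ht⟩ := hdvd α β hαβ
    exact ⟨t, RingOfIntegers.ext (by push_cast; linear_combination ht + ha - hb)⟩

section ProductOfEmbeddings

variable {E : Type*} [Field E] {K L : Type} [Field K] [Field L]

theorem exists_eq_natCast_mul_of_map_eq [NumberField K] (σ : K →+* E) {x : K} {N : ℕ} {r : E}
    (hr : IsIntegral ℤ r) (h : σ x = N * r) : ∃ t : 𝓞 K, x = N * t := by
  rcases eq_or_ne N 0 with rfl | hN
  · exact ⟨0, by simpa using h⟩
  have hNK : (N : K) ≠ 0 := Nat.cast_ne_zero.mpr hN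
  have hNE : (N : E) ≠ 0 := by rw [← map_natCast σ]; exact (map_ne_zero σ).mpr hNK
  have hσ : σ (x / N) = r := by rw [map_div₀, h, map_natCast]; field_simp
  have hint : IsIntegral ℤ (x / N) := by
    rw [← isIntegral_algHom_iff σ.toIntAlgHom σ.injective]
    exact hσ ▸ hr
  exact ⟨⟨x / N, hint⟩, by change x = N * (x / N); field_simp⟩

variable {ι : Type*} [Fintype ι] (σ : K →+* E) {ψs : ι → L →+* E} {F : L → K}

def monoidHomOfCompEqProd (hF : ∀ x, σ (F x) = ∏ j, ψs j x) : L →* K where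
  toFun := F
  map_one' := σ.injective <| by simp [hF]
  map_mul' x y := σ.injective <| by simp [hF, Finset.prod_mul_distrib]

theorem isIntegral_of_comp_eq_prod
    (hF : ∀ x, σ (F x) = ∏ j, ψs j x) {x : L} (hx : IsIntegral ℤ x) : IsIntegral ℤ (F x) := by
  rw [← isIntegral_algHom_iff σ.toIntAlgHom σ.injective]
  change IsIntegral ℤ (σ (F x))
  rw [hF]
  exact IsIntegral.prod _ fun j _ => hx.map (ψs j).toIntAlgHom

theorem ne_zero_of_comp_eq_prod
    (hF : ∀ x, σ (F x) = ∏ j, ψs j x) {x : L} (hx : x ≠ 0) : F x ≠ 0 := by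
  intro h
  obtain ⟨j, -, hj⟩ := Finset.prod_eq_zero_iff.mp (by rw [← hF, h, map_zero])
  exact hx ((map_eq_zero (ψs j)).mp hj)

theorem exists_sub_eq_natCast_mul_of_comp_eq_prod [NumberField K] [NumberField L]
    (hF : ∀ x, σ (F x) = ∏ j, ψs j x) {N : ℕ}
    {u w : 𝓞 L} (h : (N : 𝓞 L) ∣ u - w) : ∃ t : 𝓞 K, F u - F w = N * t := by
  let ψ (j : ι) : 𝓞 L →ₐ[ℤ] integralClosure ℤ E := (ψs j).toIntAlgHom.mapIntegralClosure
  obtain ⟨r, hr⟩ : (N : integralClosure ℤ E) ∣ ∏ j, ψ j u - ∏ j, ψ j w :=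
    dvd_prod_sub_prod _ fun j _ => by simpa using map_dvd (ψ j) h
  refine exists_eq_natCast_mul_of_map_eq σ r.2 ?_
  rw [map_sub, hF, hF]
  have hr' := congrArg Subtype.val hr
  push_cast at hr'
  exact hr'

end ProductOfEmbeddings

theorem stmt17_general (K Kstar : Type) [Field K] [NumberField K]
    [Field Kstar] [NumberField Kstar]
    (σ : K →+* ℂ)
    -- the reflex type (K*, {ψ_j}) and the reflex norm map
    (n : ℕ) (ψs : Fin n → (Kstar →+* ℂ))
    (gmap : Kstar → K)
    (hgmap : ∀ d : Kstar, σ (gmap d) = ∏ j : Fin n, ψs j d)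
    (N : ℕ)
    (d : Kstar) (hcong : MulCongOne Kstar N d) :
    MulCongOne K N (gmap d) :=
  hcong.map (monoidHomOfCompEqProd σ hgmap)
    (fun u => isIntegral_of_comp_eq_prod σ hgmap u.isIntegral_coe)
    (fun _ => ne_zero_of_comp_eq_prod σ hgmap)
    (fun _ _ => exists_sub_eq_natCast_mul_of_comp_eq_prod σ hgmap)

/-- the reflex norm `g : (K*)^× → K^×`, `d ↦ ∏_j ψ_j(d)`,
preserves the multiplicative congruence `≡* 1 (mod N)`. -/
theorem stmt17 (K Kstar : Type) [Field K] [NumberField K]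
    [Field Kstar] [NumberField Kstar]
    (σ : K →+* ℂ)
    -- the CM-type (K, {φ_i})
    (g : ℕ) (hg : 0 < g) (φs : Fin g → (K →+* ℂ))
    (hcover : ∀ ψ : K →+* ℂ, ∃ i, ψ = φs i ∨ ψ = (starRingEnd ℂ).comp (φs i))
    (hdist : ∀ i j, φs i ≠ (starRingEnd ℂ).comp (φs j))
    (hφ0 : φs ⟨0, hg⟩ = σ)
    -- the reflex type (K*, {ψ_j}) and the reflex norm map
    (n : ℕ) (hn : 0 < n) (ψs : Fin n → (Kstar →+* ℂ))
    (gmap : Kstar → K)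
    (hgmap : ∀ d : Kstar, σ (gmap d) = ∏ j : Fin n, ψs j d)
    (N : ℕ) (hN : 0 < N)
    (d : Kstar) (hd : d ≠ 0) (hcong : MulCongOne Kstar N d) :
    MulCongOne K N (gmap d) :=
  stmt17_general K Kstar σ n ψs gmap hgmap N d hcong
end
end
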